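/- arXiv:2111.01094 — 8 statements merged into one kernel-verified Lean document; each statement's English description precedes it below -/
import Mathlib

section
/- For every polynomial p of degree at most n with real coefficients satisfying |p(x)| ≤ 1 for all x ∈ [-1,1], and every x ∈ (-1,1), we have |p'(x)| ≤ n / √(1 - x²). -/
/-!
M. Riesz's interpolation formula: with `α_k = (2k+1)π/(4n)`, every cosine polynomial `t` of
degree `≤ n` satisfies `4n t'(θ) = ∑_{k<2n} (-1)^k t(θ + 2α_k) / sin² α_k`. For `t = cos (m ·)`
this reduces, via Dirichlet kernels, to the discrete orthogonality of `cos ((2i+1) α_k)`. The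
weights have absolute values summing to `4n²` (the case `m = n`), so `|t| ≤ 1` forces `|t'| ≤ n`.
Apply this to `t(θ) = p(cos θ)`, whose derivative is `-sin θ · p'(cos θ)`, at `θ = arccos x`.
-/

open Real Finset

lemma sin_two_mul_nat_mul_eq_sum_cos (j : ℕ) (x : ℝ) :
    sin (2 * j * x) = 2 * sin x * ∑ i ∈ range j, cos ((2 * i + 1) * x) := by
  induction j with
  | zero => simp
  | succ j ih =>
    rw [sum_range_succ, mul_add, ← ih]
    have h := sin_sub_sin (2 * (j + 1) * x) (2 * j * x)
    rw [show (2 * (j + 1) * x - 2 * j * x) / 2 = x by ring,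
      show (2 * (j + 1) * x + 2 * j * x) / 2 = (2 * j + 1) * x by ring] at h
    push_cast
    linarith

lemma sum_range_cos_odd_mul_int_mul_pi_div {N : ℕ} {M : ℤ} (hM₀ : M ≠ 0) (hM : |M| < N) :
    ∑ k ∈ range N, cos ((2 * k + 1) * (M * π / N)) = 0 := by
  have hN : (0 : ℝ) < N := by exact_mod_cast (abs_nonneg M).trans_lt hM
  have hMN : |(M : ℝ)| < N := by exact_mod_cast hM
  have hsin : sin (M * π / N) ≠ 0 := by
    rw [Ne, sin_eq_zero_iff_of_lt_of_lt]
    · exact div_ne_zero (mul_ne_zero (Int.cast_ne_zero.mpr hM₀) pi_ne_zero) hN.ne'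
    · rw [lt_div_iff₀ hN]; nlinarith [neg_abs_le (M : ℝ), pi_pos]
    · rw [div_lt_iff₀ hN]; nlinarith [le_abs_self (M : ℝ), pi_pos]
  have hsin_mul : sin (2 * N * (M * π / N)) = 0 := by
    rw [show 2 * (N : ℝ) * (M * π / N) = ((2 * M : ℤ) : ℝ) * π by push_cast; field_simp]
    exact sin_int_mul_pi _
  have h := sin_two_mul_nat_mul_eq_sum_cos N (M * π / N)
  rw [hsin_mul, eq_comm, mul_eq_zero] at h
  exact h.resolve_left (mul_ne_zero two_ne_zero hsin)

noncomputable def rieszAngle (n k : ℕ) : ℝ := (2 * k + 1) * π / (4 * n)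

lemma sin_rieszAngle_pos {n k : ℕ} (hk : k < 2 * n) : 0 < sin (rieszAngle n k) := by
  apply sin_pos_of_pos_of_lt_pi
  · have : 0 < n := by omega
    unfold rieszAngle
    positivity
  · have : (2 * k + 1 : ℝ) < 4 * n := by exact_mod_cast (by omega : 2 * k + 1 < 4 * n)
    rw [rieszAngle, div_lt_iff₀ (by linarith)]
    nlinarith [pi_pos]

lemma sin_two_mul_nat_mul_rieszAngle {n : ℕ} (hn : n ≠ 0) (k : ℕ) :
    sin (2 * n * rieszAngle n k) = (-1) ^ k := by
  rw [rieszAngle, show 2 * (n : ℝ) * ((2 * k + 1) * π / (4 * n)) = k * π + π / 2 by field_simp; ring,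
    sin_add_pi_div_two, cos_nat_mul_pi]

lemma sum_cos_mul_cos_rieszAngle {n i j : ℕ} (hi : i < n) (hj : j < n) :
    ∑ k ∈ range (2 * n), cos ((2 * i + 1) * rieszAngle n k) * cos ((2 * j + 1) * rieszAngle n k)
      = if i = j then (n : ℝ) else 0 := by
  have hn : (n : ℝ) ≠ 0 := Nat.cast_ne_zero.mpr (by omega)
  have hprod : ∀ k : ℕ,
      cos ((2 * i + 1) * rieszAngle n k) * cos ((2 * j + 1) * rieszAngle n k)
        = (cos ((2 * k + 1) * ((((i + j + 1 : ℕ) : ℤ) : ℝ) * π / (2 * n : ℕ)))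
          + cos ((2 * k + 1) * ((((i : ℤ) - j : ℤ) : ℝ) * π / (2 * n : ℕ)))) / 2 := by
    intro k
    rw [show (2 * k + 1) * ((((i + j + 1 : ℕ) : ℤ) : ℝ) * π / (2 * n : ℕ))
        = (2 * i + 1) * rieszAngle n k + (2 * j + 1) * rieszAngle n k by
          rw [rieszAngle]; push_cast; field_simp; ring,
      show (2 * k + 1) * ((((i : ℤ) - j : ℤ) : ℝ) * π / (2 * n : ℕ))
        = (2 * i + 1) * rieszAngle n k - (2 * j + 1) * rieszAngle n k by
          rw [rieszAngle]; push_cast; field_simp; ring,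
      cos_add, cos_sub]
    ring
  simp_rw [hprod, ← sum_div, sum_add_distrib]
  rw [sum_range_cos_odd_mul_int_mul_pi_div (by omega) (abs_lt.mpr ⟨by omega, by omega⟩), zero_add]
  split_ifs with hij
  · subst hij; simp
  · rw [sum_range_cos_odd_mul_int_mul_pi_div (by omega) (abs_lt.mpr ⟨by omega, by omega⟩), zero_div]

lemma sum_sin_rieszAngle {n m : ℕ} (hm : m ≤ n) :
    ∑ k ∈ range (2 * n), (-1) ^ k * sin (2 * m * rieszAngle n k) / sin (rieszAngle n k) ^ 2
      = (4 * n * m : ℝ) := by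
  -- `(-1) ^ k = sin (2 n α)`, and both sines are Dirichlet kernels times `sin α`.
  have hterm : ∀ k ∈ range (2 * n),
      (-1) ^ k * sin (2 * m * rieszAngle n k) / sin (rieszAngle n k) ^ 2
        = 4 * ∑ i ∈ range m, ∑ j ∈ range n,
            cos ((2 * i + 1) * rieszAngle n k) * cos ((2 * j + 1) * rieszAngle n k) := by
    intro k hk
    have hk := mem_range.mp hk
    have hsin := (sin_rieszAngle_pos hk).ne'
    rw [← sin_two_mul_nat_mul_rieszAngle (show n ≠ 0 by omega) k, sin_two_mul_nat_mul_eq_sum_cos n,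
      sin_two_mul_nat_mul_eq_sum_cos m, ← sum_mul_sum, div_eq_iff (pow_ne_zero 2 hsin)]
    ring
  have hinner : ∀ i ∈ range m, ∑ j ∈ range n, ∑ k ∈ range (2 * n),
      cos ((2 * i + 1) * rieszAngle n k) * cos ((2 * j + 1) * rieszAngle n k) = n := by
    intro i hi
    have hi : i < n := (mem_range.mp hi).trans_le hm
    rw [sum_congr rfl fun j hj => sum_cos_mul_cos_rieszAngle hi (mem_range.mp hj), sum_ite_eq,
      if_pos (mem_range.mpr hi)]
  rw [sum_congr rfl hterm, ← mul_sum, sum_comm]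
  simp_rw [sum_comm (s := range (2 * n))]
  rw [sum_congr rfl hinner]
  simp only [sum_const, card_range, nsmul_eq_mul]
  ring

lemma sum_cos_rieszAngle (n m : ℕ) :
    ∑ k ∈ range (2 * n), (-1) ^ k * cos (2 * m * rieszAngle n k) / sin (rieszAngle n k) ^ 2 = 0 := by
  -- the reflection `k ↦ 2n - 1 - k` maps `α` to `π - α` and flips the sign
  have hreflect : ∀ k ∈ range (2 * n),
      (-1) ^ (2 * n - 1 - k) * cos (2 * m * rieszAngle n (2 * n - 1 - k))
          / sin (rieszAngle n (2 * n - 1 - k)) ^ 2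
        = -((-1) ^ k * cos (2 * m * rieszAngle n k) / sin (rieszAngle n k) ^ 2) := by
    intro k hk
    have hk := mem_range.mp hk
    have hangle : rieszAngle n (2 * n - 1 - k) = π - rieszAngle n k := by
      have : (n : ℝ) ≠ 0 := Nat.cast_ne_zero.mpr (by omega)
      rw [rieszAngle, rieszAngle, Nat.cast_sub (by omega), Nat.cast_sub (by omega)]
      push_cast
      field_simp
      ring
    have hsign : (-1 : ℝ) ^ (2 * n - 1 - k) = -(-1) ^ k := by
      have hodd : (-1 : ℝ) ^ (2 * n - 1 - k) * (-1) ^ k = -1 := by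
        rw [← pow_add]
        exact Odd.neg_one_pow ⟨n - 1, by omega⟩
      rcases neg_one_pow_eq_or ℝ k with h | h <;> rw [h] at hodd ⊢ <;> linarith
    rw [hangle, sin_pi_sub, mul_sub, show 2 * (m : ℝ) * π = m * (2 * π) by ring,
      cos_nat_mul_two_pi_sub, hsign]
    ring
  have h := sum_range_reflect
    (fun k => (-1) ^ k * cos (2 * m * rieszAngle n k) / sin (rieszAngle n k) ^ 2) (2 * n)
  rw [sum_congr rfl hreflect, sum_neg_distrib] at h
  linarith

noncomputable def rieszSum (n : ℕ) (f : ℝ → ℝ) (θ : ℝ) : ℝ :=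
  ∑ k ∈ range (2 * n), (-1) ^ k * f (θ + 2 * rieszAngle n k) / sin (rieszAngle n k) ^ 2

lemma rieszSum_cos_nat_mul {n m : ℕ} (hm : m ≤ n) (θ : ℝ) :
    rieszSum n (fun θ => cos (m * θ)) θ = -(4 * n * m) * sin (m * θ) := by
  have hterm : ∀ k ∈ range (2 * n),
      (-1) ^ k * cos (m * (θ + 2 * rieszAngle n k)) / sin (rieszAngle n k) ^ 2
        = cos (m * θ) * ((-1) ^ k * cos (2 * m * rieszAngle n k) / sin (rieszAngle n k) ^ 2)
          - sin (m * θ) * ((-1) ^ k * sin (2 * m * rieszAngle n k) / sin (rieszAngle n k) ^ 2) := by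
    intro k _
    rw [show (m : ℝ) * (θ + 2 * rieszAngle n k) = m * θ + 2 * m * rieszAngle n k by ring, cos_add]
    ring
  rw [rieszSum, sum_congr rfl hterm, sum_sub_distrib, ← mul_sum, ← mul_sum, sum_sin_rieszAngle hm,
    sum_cos_rieszAngle]
  ring

lemma abs_rieszSum_le {n : ℕ} {f : ℝ → ℝ} (hf : ∀ θ, |f θ| ≤ 1) (θ : ℝ) :
    |rieszSum n f θ| ≤ (4 * n * n : ℝ) := by
  calc |rieszSum n f θ|
      ≤ ∑ k ∈ range (2 * n), |(-1) ^ k * f (θ + 2 * rieszAngle n k) / sin (rieszAngle n k) ^ 2| :=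
        abs_sum_le_sum_abs _ _
    _ ≤ ∑ k ∈ range (2 * n), (-1) ^ k * sin (2 * n * rieszAngle n k) / sin (rieszAngle n k) ^ 2 := by
        refine sum_le_sum fun k hk => ?_
        have hn : n ≠ 0 := by rw [mem_range] at hk; omega
        rw [sin_two_mul_nat_mul_rieszAngle hn k, ← pow_add, ← two_mul, pow_mul, neg_one_sq,
          one_pow, abs_div, abs_mul, abs_pow, abs_neg, abs_one, one_pow, one_mul, abs_sq]
        gcongr
        exact hf _
    _ = 4 * n * n := sum_sin_rieszAngle le_rfl

def cosPolynomials (n : ℕ) : Submodule ℝ (ℝ → ℝ) :=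
  Submodule.span ℝ ((fun m : ℕ => fun θ : ℝ => cos (m * θ)) '' Set.Iic n)

lemma cos_nat_mul_mem_cosPolynomials {n m : ℕ} (hm : m ≤ n) :
    (fun θ : ℝ => cos (m * θ)) ∈ cosPolynomials n :=
  Submodule.subset_span ⟨m, hm, rfl⟩

lemma cosPolynomials_mono {n n' : ℕ} (h : n ≤ n') : cosPolynomials n ≤ cosPolynomials n' :=
  Submodule.span_mono (Set.image_mono (Set.Iic_subset_Iic.mpr h))

lemma cos_mul_mem_cosPolynomials {n : ℕ} {f : ℝ → ℝ} (hf : f ∈ cosPolynomials n) :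
    cos * f ∈ cosPolynomials (n + 1) := by
  suffices h : (cosPolynomials n).map (LinearMap.mulLeft ℝ cos) ≤ cosPolynomials (n + 1) from
    h (Submodule.mem_map_of_mem hf)
  refine (Submodule.map_span_le _ _ _).mpr ?_
  rintro _ ⟨m, hm, rfl⟩
  rcases m with _ | m
  · convert cos_nat_mul_mem_cosPolynomials (n := n + 1) (m := 1) (by omega) using 1
    funext θ
    simp
  · have h : cos * (fun θ : ℝ => cos ((m + 1 : ℕ) * θ))
        = (1 / 2 : ℝ) • (fun θ : ℝ => cos ((m + 2 : ℕ) * θ))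
          + (1 / 2 : ℝ) • fun θ : ℝ => cos (m * θ) := by
      funext θ
      simp only [Pi.mul_apply, Pi.add_apply, Pi.smul_apply, smul_eq_mul]
      rw [show ((m + 2 : ℕ) : ℝ) * θ = (m + 1 : ℕ) * θ + θ by push_cast; ring,
        show (m : ℝ) * θ = (m + 1 : ℕ) * θ - θ by push_cast; ring, cos_add, cos_sub]
      ring
    rw [LinearMap.mulLeft_apply, h]
    have hm : m + 1 ≤ n := hm
    exact Submodule.add_mem _
      (Submodule.smul_mem _ _ (cos_nat_mul_mem_cosPolynomials (by omega)))
      (Submodule.smul_mem _ _ (cos_nat_mul_mem_cosPolynomials (by omega)))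

lemma cos_pow_mem_cosPolynomials (j : ℕ) : cos ^ j ∈ cosPolynomials j := by
  induction j with
  | zero =>
    convert cos_nat_mul_mem_cosPolynomials (n := 0) le_rfl using 1
    funext θ
    simp
  | succ j ih => simpa [pow_succ'] using cos_mul_mem_cosPolynomials ih

lemma eval_cos_mem_cosPolynomials {n : ℕ} {p : Polynomial ℝ} (hp : p.natDegree ≤ n) :
    (fun θ => p.eval (cos θ)) ∈ cosPolynomials n := by
  have h : (fun θ => p.eval (cos θ)) = ∑ j ∈ range (n + 1), p.coeff j • cos ^ j := by
    funext θ
    simp [Polynomial.eval_eq_sum_range' (Nat.lt_succ_of_le hp)]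
  rw [h]
  exact Submodule.sum_mem _ fun j hj => Submodule.smul_mem _ _
    (cosPolynomials_mono (Nat.lt_succ_iff.mp (mem_range.mp hj)) (cos_pow_mem_cosPolynomials j))

lemma differentiable_of_mem_cosPolynomials {n : ℕ} {f : ℝ → ℝ} (hf : f ∈ cosPolynomials n) :
    Differentiable ℝ f := by
  induction hf using Submodule.span_induction with
  | mem g hg => obtain ⟨m, -, rfl⟩ := hg; fun_prop
  | zero => exact differentiable_const 0
  | add f g _ _ hf hg => exact hf.add hg
  | smul a f _ hf => exact hf.const_smul a

lemma rieszSum_eq_of_mem_cosPolynomials {n : ℕ} {f : ℝ → ℝ} (hf : f ∈ cosPolynomials n)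
    (θ : ℝ) : rieszSum n f θ = 4 * n * deriv f θ := by
  induction hf using Submodule.span_induction generalizing θ with
  | mem g hg =>
    obtain ⟨m, hm, rfl⟩ := hg
    beta_reduce
    rw [rieszSum_cos_nat_mul hm, ((hasDerivAt_id' θ).const_mul (m : ℝ)).cos.deriv]
    ring
  | zero => simp [rieszSum]
  | add f g hf hg ihf ihg =>
    rw [deriv_add (differentiable_of_mem_cosPolynomials hf θ)
      (differentiable_of_mem_cosPolynomials hg θ), mul_add, ← ihf, ← ihg]
    simp only [rieszSum, Pi.add_apply, mul_add, add_div, sum_add_distrib]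
  | smul a f hf ihf =>
    rw [deriv_const_smul a (differentiable_of_mem_cosPolynomials hf θ), smul_eq_mul,
      mul_left_comm, ← ihf]
    simp only [rieszSum, Pi.smul_apply, smul_eq_mul, mul_sum]
    exact sum_congr rfl fun k _ => by ring

lemma abs_deriv_le_of_mem_cosPolynomials {n : ℕ} (hn : 0 < n) {f : ℝ → ℝ}
    (hf : f ∈ cosPolynomials n) (hbound : ∀ θ, |f θ| ≤ 1) (θ : ℝ) : |deriv f θ| ≤ n := by
  have h := abs_rieszSum_le (n := n) hbound θ
  rw [rieszSum_eq_of_mem_cosPolynomials hf, abs_mul, abs_of_pos (by positivity)] at h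
  nlinarith [show (0 : ℝ) < n by exact_mod_cast hn]

theorem bernstein_inequality (n : ℕ) (p : Polynomial ℝ) (hdeg : p.natDegree ≤ n)
    (hb : ∀ x ∈ Set.Icc (-1 : ℝ) 1, |p.eval x| ≤ 1) :
    ∀ x ∈ Set.Ioo (-1 : ℝ) 1, |p.derivative.eval x| ≤ (n : ℝ) / Real.sqrt (1 - x ^ 2) := by
  rintro x ⟨hx₁, hx₂⟩
  rcases Nat.eq_zero_or_pos n with rfl | hn
  · simp [Polynomial.derivative_of_natDegree_zero (Nat.le_zero.mp hdeg)]
  have hsqrt : 0 < √(1 - x ^ 2) := sqrt_pos.mpr (by nlinarith)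
  have hderiv : HasDerivAt (fun θ => p.eval (cos θ)) _ (arccos x) :=
    (p.hasDerivAt (cos (arccos x))).comp (arccos x) (hasDerivAt_cos (arccos x))
  have h := abs_deriv_le_of_mem_cosPolynomials hn (eval_cos_mem_cosPolynomials hdeg)
    (fun θ => hb _ ⟨neg_one_le_cos θ, cos_le_one θ⟩) (arccos x)
  rw [hderiv.deriv, cos_arccos hx₁.le hx₂.le, sin_arccos, abs_mul, abs_neg,
    abs_of_pos hsqrt] at h
  rw [le_div_iff₀ hsqrt]
  exact h
end

section
/- The k-th derivative of the Chebyshev polynomial of the first kind T_n evaluated at 1 equals n²(n²-1²)(n²-2²)⋯(n²-(k-1)²)/(2k-1)!!, for 1 ≤ k ≤ n. -/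
open Polynomial Polynomial.Chebyshev

private lemma eval_one_T (n : ℤ) : (T ℝ n).eval 1 = 1 := by
  induction n using Polynomial.Chebyshev.induct with
  | zero => simp
  | one => simp
  | add_two n ih1 ih2 =>
    rw [T_add_two]
    simp [ih1, ih2]
    norm_num
  | neg_add_one n ih1 ih2 =>
    have h : (-(n:ℤ) - 1) = -(n:ℤ) + 1 - 2 := by ring
    rw [h, T_sub_two]
    have h2 : (-(n:ℤ) + 1 - 1) = -(n:ℤ) := by ring
    rw [h2]
    simp only [T_neg] at ih1
    simp [ih1, ih2]
    linarith [ih1]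

private lemma cheb_ode (n : ℤ) :
    (1 - X ^ 2 : ℝ[X]) * derivative (derivative (T ℝ n)) =
      X * derivative (T ℝ n) - (n : ℝ[X]) ^ 2 * T ℝ n := by
  have h1 := T_derivative_eq_U (R := ℝ) n
  have h2 := add_one_mul_T_eq_poly_in_U (R := ℝ) (n - 1)
  have h1' := congr_arg derivative h1
  rw [derivative_mul] at h1'
  simp only [derivative_intCast, zero_mul, zero_add] at h1'
  have hT : T ℝ (n - 1 + 1) = T ℝ n := by norm_num
  rw [hT] at h2
  linear_combination (norm := (push_cast; ring))
    (1 - X ^ 2 : ℝ[X]) * h1' + (n : ℝ[X]) * h2 + (-X) * h1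

private lemma cheb_ode_iter (n : ℤ) (m : ℕ) :
    (1 - X ^ 2 : ℝ[X]) * (derivative^[m + 2]) (T ℝ n) =
      (2 * (m : ℝ[X]) + 1) * X * (derivative^[m + 1]) (T ℝ n) -
        ((n : ℝ[X]) ^ 2 - (m : ℝ[X]) ^ 2) * (derivative^[m]) (T ℝ n) := by
  induction m with
  | zero =>
    simpa using cheb_ode n
  | succ m ih =>
    have h := congr_arg derivative ih
    simp only [derivative_sub, derivative_mul, derivative_add, derivative_one, derivative_X_pow,
      derivative_X, derivative_natCast, derivative_intCast, derivative_pow, derivative_ofNat,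
      C_eq_natCast] at h
    have e3 : derivative ((derivative^[m + 2]) (T ℝ n)) = (derivative^[m + 3]) (T ℝ n) := by
      rw [← Function.iterate_succ_apply' derivative]
    have e2 : derivative ((derivative^[m + 1]) (T ℝ n)) = (derivative^[m + 2]) (T ℝ n) := by
      rw [← Function.iterate_succ_apply' derivative]
    have e1 : derivative ((derivative^[m]) (T ℝ n)) = (derivative^[m + 1]) (T ℝ n) := by
      rw [← Function.iterate_succ_apply' derivative]
    rw [e3, e2, e1] at h
    push_cast
    push_cast at h
    linear_combination h

private lemma cheb_rec (n : ℤ) (m : ℕ) :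
    (2 * (m : ℝ) + 1) * ((derivative^[m + 1]) (T ℝ n)).eval 1 =
      ((n : ℝ) ^ 2 - (m : ℝ) ^ 2) * ((derivative^[m]) (T ℝ n)).eval 1 := by
  have h := congr_arg (Polynomial.eval (1 : ℝ)) (cheb_ode_iter n m)
  simp only [eval_mul, eval_sub, eval_add, eval_one, eval_pow, eval_X, eval_natCast,
    eval_intCast, eval_ofNat] at h
  push_cast at h ⊢
  nlinarith [h]

theorem chebyshev_kth_derivative_at_one (n k : ℕ) (hk1 : 1 ≤ k) (hkn : k ≤ n) :
    ((Polynomial.derivative^[k]) (Polynomial.Chebyshev.T ℝ n)).eval 1 =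
      (∏ i ∈ Finset.range k, ((n : ℝ) ^ 2 - (i : ℝ) ^ 2)) /
        (∏ i ∈ Finset.range k, (2 * (i : ℝ) + 1)) := by
  clear hk1 hkn
  induction k with
  | zero => simpa using eval_one_T (n : ℤ)
  | succ k ih =>
    have hpos : (0 : ℝ) < ∏ i ∈ Finset.range k, (2 * (i : ℝ) + 1) := by
      apply Finset.prod_pos
      intro i _
      positivity
    have hpos' : (0 : ℝ) < 2 * (k : ℝ) + 1 := by positivity
    have h := cheb_rec (n : ℤ) k
    push_cast at h
    rw [ih] at h
    rw [Finset.prod_range_succ, Finset.prod_range_succ]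
    field_simp at h ⊢
    linear_combination h
end

section
/- Let X = L²(ℝ, e^{-t²} dt). For every real polynomial p of degree at most n and every 1 ≤ k ≤ n, ‖p^{(k)}‖_X ≤ 2^{k/2} √(n!/(n-k)!) · ‖p‖_X, and equality holds for p = H_n, the n-th Hermite polynomial. Consequently sup over nonzero p ∈ P_n of ‖p^{(k)}‖_X/‖p‖_X equals 2^{k/2} √(n!/(n-k)!). -/
open MeasureTheory Polynomial

/-- Physicists' Hermite polynomials: `H₀ = 1`, `H₁ = 2X`,
`H_{n+2} = 2X·H_{n+1} - 2(n+1)·H_n`. -/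
noncomputable def physHermite : ℕ → Polynomial ℝ
  | 0 => 1
  | 1 => C (2 : ℝ) * X
  | (n + 2) => C (2 : ℝ) * X * physHermite (n + 1) - C (2 * (n + 1) : ℝ) * physHermite n

/-- The `L²(ℝ, e^{-t²} dt)` norm of a polynomial. -/
noncomputable def hermiteNorm (p : Polynomial ℝ) : ℝ :=
  Real.sqrt (∫ t : ℝ, (p.eval t) ^ 2 * Real.exp (-t ^ 2))

/-!
The Hermite polynomials `Hⱼ` are orthogonal for the weight `e^{-x²}`, with `‖Hⱼ‖² = 2ʲ j! √π` and
`Hⱼ' = 2j Hⱼ₋₁`. The adjoint of differentiation is the raising operator `p ↦ 2Xp - p'`, which sends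
`Hⱼ'` back to `2j Hⱼ`; so for `p = ∑ cⱼ Hⱼ` of degree at most `n`,
`‖p'‖² = ∑ 2j cⱼ² ‖Hⱼ‖² ≤ 2n ‖p‖²`, with equality for `p = Hₙ`. Since `p⁽ⁱ⁾` has degree at
most `n - i`, iterating gives `‖p⁽ᵏ⁾‖² ≤ 2ᵏ n!/(n-k)! ‖p‖²`, and for `Hₙ`, whose derivatives are
multiples of Hermite polynomials, every step is an equality.
-/

open Real

theorem integrable_eval_mul_exp_neg_sq (p : ℝ[X]) :
    Integrable fun x : ℝ => p.eval x * exp (-x ^ 2) := by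
  have hmonomial (i : ℕ) : Integrable fun x : ℝ => x ^ i * exp (-x ^ 2) := by
    simpa [rpow_natCast] using
      integrable_rpow_mul_exp_neg_mul_sq one_pos (s := i) (by linarith [i.cast_nonneg (α := ℝ)])
  simp_rw [eval_eq_sum_range, Finset.sum_mul, mul_assoc]
  exact integrable_finsetSum _ fun i _ => (hmonomial i).const_mul _

noncomputable def gaussIntegral : ℝ[X] →ₗ[ℝ] ℝ where
  toFun p := ∫ x, p.eval x * exp (-x ^ 2)
  map_add' p q := by
    simp only [eval_add, add_mul]
    exact integral_add (integrable_eval_mul_exp_neg_sq p) (integrable_eval_mul_exp_neg_sq q)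
  map_smul' c p := by
    simp only [eval_smul, smul_eq_mul, RingHom.id_apply, mul_assoc]
    exact integral_const_mul c _

theorem gaussIntegral_apply (p : ℝ[X]) : gaussIntegral p = ∫ x, p.eval x * exp (-x ^ 2) := rfl

theorem hermiteNorm_eq_sqrt_gaussIntegral (p : ℝ[X]) :
    hermiteNorm p = √(gaussIntegral (p * p)) := by
  simp only [hermiteNorm, gaussIntegral_apply, eval_mul, sq]

/-- The adjoint of `derivative` for the weight `e^{-x²}`. -/
noncomputable def hermiteRaise : ℝ[X] →ₗ[ℝ] ℝ[X] :=
  (2 : ℝ) • LinearMap.mulLeft ℝ X - derivative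

theorem hermiteRaise_apply (p : ℝ[X]) : hermiteRaise p = C 2 * X * p - derivative p := by
  simp [hermiteRaise, smul_eq_C_mul, mul_assoc]

theorem hermiteRaise_mul (p q : ℝ[X]) :
    hermiteRaise (p * q) = p * hermiteRaise q - derivative p * q := by
  simp only [hermiteRaise_apply, derivative_mul]
  ring

/-- `(2xp - p') e^{-x²} = -(p e^{-x²})'` integrates to zero. -/
theorem gaussIntegral_hermiteRaise (p : ℝ[X]) : gaussIntegral (hermiteRaise p) = 0 := by
  have hderiv (x : ℝ) : HasDerivAt (fun x => p.eval x * exp (-x ^ 2))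
      (-((hermiteRaise p).eval x * exp (-x ^ 2))) x := by
    have hexp : HasDerivAt (fun x : ℝ => exp (-x ^ 2)) (exp (-x ^ 2) * -(2 * x)) x := by
      simpa using ((hasDerivAt_pow 2 x).neg).exp
    refine ((p.hasDerivAt x).fun_mul hexp).congr_deriv ?_
    simp only [hermiteRaise_apply, eval_sub, eval_mul, eval_C, eval_X]
    ring
  have h := integral_eq_zero_of_hasDerivAt_of_integrable hderiv
    (integrable_eval_mul_exp_neg_sq _).neg (integrable_eval_mul_exp_neg_sq p)
  rwa [integral_neg, neg_eq_zero] at h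

theorem gaussIntegral_derivative_mul (p q : ℝ[X]) :
    gaussIntegral (derivative p * q) = gaussIntegral (p * hermiteRaise q) := by
  have h := gaussIntegral_hermiteRaise (p * q)
  rw [hermiteRaise_mul, map_sub, sub_eq_zero] at h
  exact h.symm

theorem derivative_physHermite_succ (n : ℕ) :
    derivative (physHermite (n + 1)) = (2 * (n + 1) : ℝ) • physHermite n := by
  induction n using Nat.twoStepInduction with
  | zero => simp [physHermite, smul_eq_C_mul]
  | one =>
    simp only [physHermite, derivative_mul, derivative_sub, derivative_C, derivative_X,
      smul_eq_C_mul]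
    simp only [Nat.cast_zero, Nat.cast_one, derivative_one, C_mul, C_add, C_1, map_ofNat]
    ring
  | more n ih₀ ih₁ =>
    rw [physHermite, derivative_sub, derivative_mul, derivative_mul, derivative_mul, ih₁, ih₀,
      physHermite]
    simp only [derivative_C, derivative_X, smul_eq_C_mul]
    push_cast
    simp only [C_add, C_mul, C_1, C_ofNat]
    ring

theorem derivative_physHermite (n : ℕ) :
    derivative (physHermite n) = (2 * n : ℝ) • physHermite (n - 1) := by
  cases n with
  | zero => simp [physHermite]
  | succ n => simpa using derivative_physHermite_succ n

theorem hermiteRaise_physHermite (n : ℕ) : hermiteRaise (physHermite n) = physHermite (n + 1) := by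
  cases n with
  | zero => simp [hermiteRaise_apply, physHermite]
  | succ n =>
    rw [hermiteRaise_apply, derivative_physHermite_succ, smul_eq_C_mul, physHermite]

theorem hermiteRaise_derivative_physHermite (n : ℕ) :
    hermiteRaise (derivative (physHermite n)) = (2 * n : ℝ) • physHermite n := by
  cases n with
  | zero => simp [physHermite]
  | succ n => rw [derivative_physHermite_succ, map_smul, hermiteRaise_physHermite, Nat.cast_succ]

theorem degree_physHermite (n : ℕ) : (physHermite n).degree = n := by
  induction n with
  | zero => simp [physHermite]
  | succ n ih =>
    have hlead : (C 2 * X * physHermite n).degree = ↑(n + 1) := by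
      rw [mul_assoc, mul_comm X, degree_C_mul two_ne_zero, degree_mul_X, ih]
      rfl
    have hlower : (derivative (physHermite n)).degree < ↑(n + 1) :=
      degree_derivative_le.trans_lt (by rw [ih]; exact_mod_cast n.lt_succ_self)
    rw [← hermiteRaise_physHermite, hermiteRaise_apply,
      degree_sub_eq_left_of_degree_lt (hlead ▸ hlower), hlead]

theorem physHermite_ne_zero (n : ℕ) : physHermite n ≠ 0 :=
  degree_ne_bot.mp (by rw [degree_physHermite]; exact WithBot.coe_ne_bot)

theorem natDegree_physHermite (n : ℕ) : (physHermite n).natDegree = n :=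
  natDegree_eq_of_degree_eq_some (degree_physHermite n)

noncomputable def physHermiteSequence : Polynomial.Sequence ℝ := ⟨physHermite, degree_physHermite⟩

theorem exists_eq_sum_smul_physHermite {p : ℝ[X]} {n : ℕ} (hp : p.natDegree ≤ n) :
    ∃ c : ℕ → ℝ, p = ∑ j ∈ Finset.range (n + 1), c j • physHermite j := by
  have hspan := physHermiteSequence.span_degreeLT (m := n + 1) fun i _ =>
    (leadingCoeff_ne_zero.mpr (physHermite_ne_zero i)).isUnit
  have hmem : p ∈ degreeLT ℝ (n + 1) := by
    rw [mem_degreeLT]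
    exact (degree_le_of_natDegree_le hp).trans_lt (by exact_mod_cast n.lt_succ_self)
  rw [← hspan, ← Finset.coe_range, Submodule.mem_span_image_finset_iff_exists_fun'] at hmem
  obtain ⟨c, hc⟩ := hmem
  exact ⟨c, hc.symm⟩

theorem gaussIntegral_physHermite_mul_of_lt {m n : ℕ} (h : m < n) :
    gaussIntegral (physHermite m * physHermite n) = 0 := by
  induction m generalizing n with
  | zero =>
    obtain ⟨n, rfl⟩ : ∃ c, n = c + 1 := ⟨n - 1, by omega⟩
    rw [← hermiteRaise_physHermite n, ← gaussIntegral_derivative_mul]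
    simp [physHermite]
  | succ m ih =>
    obtain ⟨n, rfl⟩ : ∃ c, n = c + 1 := ⟨n - 1, by omega⟩
    rw [← hermiteRaise_physHermite n, ← gaussIntegral_derivative_mul, derivative_physHermite_succ,
      smul_mul_assoc, map_smul, ih (by omega), smul_zero]

theorem gaussIntegral_physHermite_mul_of_ne {m n : ℕ} (h : m ≠ n) :
    gaussIntegral (physHermite m * physHermite n) = 0 := by
  rcases h.lt_or_gt with h | h
  · exact gaussIntegral_physHermite_mul_of_lt h
  · rw [mul_comm]
    exact gaussIntegral_physHermite_mul_of_lt h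

theorem gaussIntegral_physHermite_mul_self (n : ℕ) :
    gaussIntegral (physHermite n * physHermite n) = 2 ^ n * n.factorial * √π := by
  induction n with
  | zero => simpa [physHermite, gaussIntegral_apply] using integral_gaussian 1
  | succ n ih =>
    have h := gaussIntegral_derivative_mul (physHermite (n + 1)) (physHermite n)
    rw [hermiteRaise_physHermite, derivative_physHermite_succ, smul_mul_assoc, map_smul, ih,
      smul_eq_mul] at h
    rw [← h, Nat.factorial_succ]
    push_cast
    ring

theorem gaussIntegral_physHermite_mul_self_pos (n : ℕ) :
    0 < gaussIntegral (physHermite n * physHermite n) := by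
  rw [gaussIntegral_physHermite_mul_self]
  positivity

theorem gaussIntegral_sum_smul_physHermite_mul_sum (s : Finset ℕ) (a b : ℕ → ℝ) :
    gaussIntegral ((∑ i ∈ s, a i • physHermite i) * ∑ j ∈ s, b j • physHermite j) =
      ∑ j ∈ s, a j * b j * gaussIntegral (physHermite j * physHermite j) := by
  rw [Finset.sum_mul_sum, map_sum]
  refine Finset.sum_congr rfl fun i hi => ?_
  rw [map_sum, Finset.sum_eq_single i]
  · rw [smul_mul_smul_comm, map_smul, smul_eq_mul]
  · intro j _ hji
    rw [smul_mul_smul_comm, map_smul, gaussIntegral_physHermite_mul_of_ne hji.symm, smul_zero]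
  · exact fun hi' => absurd hi hi'

theorem gaussIntegral_derivative_mul_self_le {p : ℝ[X]} {n : ℕ} (hp : p.natDegree ≤ n) :
    gaussIntegral (derivative p * derivative p) ≤ 2 * n * gaussIntegral (p * p) := by
  obtain ⟨c, rfl⟩ := exists_eq_sum_smul_physHermite hp
  have hnumber : hermiteRaise (derivative (∑ j ∈ Finset.range (n + 1), c j • physHermite j)) =
      ∑ j ∈ Finset.range (n + 1), (2 * j * c j) • physHermite j := by
    simp only [map_sum, map_smul, hermiteRaise_derivative_physHermite, smul_smul, mul_comm (c _)]
  rw [gaussIntegral_derivative_mul, hnumber, gaussIntegral_sum_smul_physHermite_mul_sum,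
    gaussIntegral_sum_smul_physHermite_mul_sum, Finset.mul_sum]
  refine Finset.sum_le_sum fun j hj => ?_
  have hj : (j : ℝ) ≤ n := by exact_mod_cast Finset.mem_range_succ_iff.mp hj
  have hHj := (gaussIntegral_physHermite_mul_self_pos j).le
  calc c j * (2 * j * c j) * gaussIntegral (physHermite j * physHermite j)
      = 2 * j * (c j * c j * gaussIntegral (physHermite j * physHermite j)) := by ring
    _ ≤ 2 * n * (c j * c j * gaussIntegral (physHermite j * physHermite j)) :=
      mul_le_mul_of_nonneg_right (by linarith) (mul_nonneg (mul_self_nonneg _) hHj)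

theorem gaussIntegral_iterate_derivative_mul_self_le {p : ℝ[X]} {n : ℕ} (hp : p.natDegree ≤ n)
    (k : ℕ) : gaussIntegral (derivative^[k] p * derivative^[k] p) ≤
      2 ^ k * n.descFactorial k * gaussIntegral (p * p) := by
  induction k with
  | zero => simp
  | succ k ih =>
    have hdeg : (derivative^[k] p).natDegree ≤ n - k :=
      (natDegree_iterate_derivative p k).trans (Nat.sub_le_sub_right hp k)
    calc gaussIntegral (derivative^[k + 1] p * derivative^[k + 1] p)
        ≤ 2 * (n - k : ℕ) * gaussIntegral (derivative^[k] p * derivative^[k] p) := by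
          rw [Function.iterate_succ_apply']
          exact gaussIntegral_derivative_mul_self_le hdeg
      _ ≤ 2 * (n - k : ℕ) * (2 ^ k * n.descFactorial k * gaussIntegral (p * p)) := by
          gcongr
      _ = 2 ^ (k + 1) * n.descFactorial (k + 1) * gaussIntegral (p * p) := by
          rw [Nat.descFactorial_succ]
          push_cast
          ring

/-- For `k > n` both sides vanish, since then `n.descFactorial k = 0`. -/
theorem iterate_derivative_physHermite (n k : ℕ) :
    derivative^[k] (physHermite n) = (2 ^ k * n.descFactorial k : ℝ) • physHermite (n - k) := by
  induction k with
  | zero => simp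
  | succ k ih =>
    rw [Function.iterate_succ_apply', ih, derivative_smul, derivative_physHermite, smul_smul,
      Nat.sub_sub, Nat.descFactorial_succ]
    push_cast
    ring_nf

theorem gaussIntegral_physHermite_mul_self_eq_descFactorial_mul {n k : ℕ} (hk : k ≤ n) :
    gaussIntegral (physHermite n * physHermite n) =
      2 ^ k * n.descFactorial k * gaussIntegral (physHermite (n - k) * physHermite (n - k)) := by
  have hfact : ((n - k).factorial * n.descFactorial k : ℝ) = n.factorial := by
    exact_mod_cast Nat.factorial_mul_descFactorial hk
  have hpow : (2 : ℝ) ^ n = 2 ^ k * 2 ^ (n - k) := by rw [← pow_add, Nat.add_sub_cancel' hk]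
  rw [gaussIntegral_physHermite_mul_self, gaussIntegral_physHermite_mul_self, ← hfact, hpow]
  ring

theorem gaussIntegral_iterate_derivative_physHermite_mul_self {n k : ℕ} (hk : k ≤ n) :
    gaussIntegral (derivative^[k] (physHermite n) * derivative^[k] (physHermite n)) =
      2 ^ k * n.descFactorial k * gaussIntegral (physHermite n * physHermite n) := by
  rw [iterate_derivative_physHermite, smul_mul_smul_comm, map_smul, smul_eq_mul,
    gaussIntegral_physHermite_mul_self_eq_descFactorial_mul hk]
  ring

theorem hermiteNorm_iterate_derivative_le {p : ℝ[X]} {n : ℕ} (hp : p.natDegree ≤ n) (k : ℕ) :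
    hermiteNorm (derivative^[k] p) ≤ √(2 ^ k * n.descFactorial k) * hermiteNorm p := by
  rw [hermiteNorm_eq_sqrt_gaussIntegral, hermiteNorm_eq_sqrt_gaussIntegral,
    ← sqrt_mul (by positivity)]
  exact sqrt_le_sqrt (gaussIntegral_iterate_derivative_mul_self_le hp k)

theorem hermiteNorm_iterate_derivative_physHermite {n k : ℕ} (hk : k ≤ n) :
    hermiteNorm (derivative^[k] (physHermite n)) =
      √(2 ^ k * n.descFactorial k) * hermiteNorm (physHermite n) := by
  rw [hermiteNorm_eq_sqrt_gaussIntegral, hermiteNorm_eq_sqrt_gaussIntegral,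
    ← sqrt_mul (by positivity), gaussIntegral_iterate_derivative_physHermite_mul_self hk]

theorem hermiteNorm_physHermite_pos (n : ℕ) : 0 < hermiteNorm (physHermite n) := by
  rw [hermiteNorm_eq_sqrt_gaussIntegral]
  exact sqrt_pos.mpr (gaussIntegral_physHermite_mul_self_pos n)

theorem two_rpow_half_mul_sqrt_factorial_div {n k : ℕ} (hk : k ≤ n) :
    (2 : ℝ) ^ ((k : ℝ) / 2) * √((n.factorial : ℝ) / (n - k).factorial) =
      √(2 ^ k * n.descFactorial k) := by
  have hfact : ((n - k).factorial * n.descFactorial k : ℝ) = n.factorial := by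
    exact_mod_cast Nat.factorial_mul_descFactorial hk
  have hpow : (2 : ℝ) ^ ((k : ℝ) / 2) = √(2 ^ k) := by
    rw [sqrt_eq_rpow, ← rpow_natCast, ← rpow_mul zero_le_two, div_eq_mul_one_div]
  rw [← hfact, mul_div_cancel_left₀ _ (by positivity), hpow, ← sqrt_mul (by positivity)]

theorem markov_L2_hermite_general (n k : ℕ) (hkn : k ≤ n) :
    (∀ p : Polynomial ℝ, p.natDegree ≤ n →
        hermiteNorm ((Polynomial.derivative^[k]) p) ≤
          (2 : ℝ) ^ ((k : ℝ) / 2) * Real.sqrt ((n.factorial : ℝ) / ((n - k).factorial : ℝ)) *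
            hermiteNorm p) ∧
    hermiteNorm ((Polynomial.derivative^[k]) (physHermite n)) =
      (2 : ℝ) ^ ((k : ℝ) / 2) * Real.sqrt ((n.factorial : ℝ) / ((n - k).factorial : ℝ)) *
        hermiteNorm (physHermite n) ∧
    sSup {r : ℝ | ∃ p : Polynomial ℝ, p ≠ 0 ∧ p.natDegree ≤ n ∧
        r = hermiteNorm ((Polynomial.derivative^[k]) p) / hermiteNorm p} =
      (2 : ℝ) ^ ((k : ℝ) / 2) * Real.sqrt ((n.factorial : ℝ) / ((n - k).factorial : ℝ)) := by
  rw [two_rpow_half_mul_sqrt_factorial_div hkn]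
  refine ⟨fun p hp => hermiteNorm_iterate_derivative_le hp k,
    hermiteNorm_iterate_derivative_physHermite hkn, IsGreatest.csSup_eq ⟨?_, ?_⟩⟩
  · refine ⟨physHermite n, physHermite_ne_zero n, (natDegree_physHermite n).le, ?_⟩
    rw [hermiteNorm_iterate_derivative_physHermite hkn,
      mul_div_cancel_right₀ _ (hermiteNorm_physHermite_pos n).ne']
  · rintro r ⟨p, -, hp, rfl⟩
    exact div_le_of_le_mul₀ (sqrt_nonneg _) (sqrt_nonneg _)
      (hermiteNorm_iterate_derivative_le hp k)

theorem markov_L2_hermite (n k : ℕ) (hk1 : 1 ≤ k) (hkn : k ≤ n) :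
    (∀ p : Polynomial ℝ, p.natDegree ≤ n →
        hermiteNorm ((Polynomial.derivative^[k]) p) ≤
          (2 : ℝ) ^ ((k : ℝ) / 2) * Real.sqrt ((n.factorial : ℝ) / ((n - k).factorial : ℝ)) *
            hermiteNorm p) ∧
    hermiteNorm ((Polynomial.derivative^[k]) (physHermite n)) =
      (2 : ℝ) ^ ((k : ℝ) / 2) * Real.sqrt ((n.factorial : ℝ) / ((n - k).factorial : ℝ)) *
        hermiteNorm (physHermite n) ∧
    sSup {r : ℝ | ∃ p : Polynomial ℝ, p ≠ 0 ∧ p.natDegree ≤ n ∧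
        r = hermiteNorm ((Polynomial.derivative^[k]) p) / hermiteNorm p} =
      (2 : ℝ) ^ ((k : ℝ) / 2) * Real.sqrt ((n.factorial : ℝ) / ((n - k).factorial : ℝ)) :=
  markov_L2_hermite_general n k hkn
end

section
/- Let ℓ_n denote the orthonormal Laguerre polynomials on (0,∞) with weight e^{-t}. Then for 1 ≤ k ≤ n, d^k/dt^k ℓ_n(t) = (-1)^{n-k} Σ_{ν=0}^{n-k} (-1)^ν C(n-ν-1, k-1) ℓ_ν(t). -/
open MeasureTheory

/-!
Write `Lₙ = ∑ᵢ (-1)ⁱ C(n,i) Xⁱ / i!` for the classical Laguerre polynomial. Integrating term by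
term against `e^{-t}` gives `⟨Xʳ, Lₙ⟩ = (-1)ⁿ r! C(r,n)` (an `n`-th forward difference of
`i ↦ C(i + r, r)`), so `(-1)ⁿ Lₙ` is orthogonal to all polynomials of degree `< n`, has norm one
and positive leading coefficient. An orthonormal sequence of polynomials with these properties is
unique, hence `ℓₙ = (-1)ⁿ Lₙ`.

Comparing coefficients with the hockey-stick identity gives `Lₙ' = -∑_{μ<n} L_μ`; iterating and
summing by hockey stick once more gives `Lₙ^{(k+1)} = (-1)^{k+1} ∑_{ν<n} C(n-ν-1,k) L_ν`.
-/

open Finset Polynomial Nat Set Real fwdDiff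

theorem neg_one_pow_eq_of_mod_two_eq {R : Type*} [Ring R] {a b : ℕ} (h : a % 2 = b % 2) :
    (-1 : R) ^ a = (-1) ^ b := by
  rw [neg_one_pow_eq_pow_mod_two, h, ← neg_one_pow_eq_pow_mod_two]

theorem Nat.sum_range_choose_eq_choose_succ (m k : ℕ) :
    ∑ i ∈ range m, i.choose k = m.choose (k + 1) := by
  induction m with
  | zero => simp
  | succ m ih => rw [sum_range_succ, ih, Nat.choose_succ_succ', add_comm]

theorem Nat.sum_Ioo_choose_sub_sub_one (μ n k : ℕ) :
    ∑ ν ∈ Ioo μ n, (n - ν - 1).choose k = (n - μ - 1).choose (k + 1) := by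
  rw [← Nat.sum_range_choose_eq_choose_succ]
  refine sum_nbij' (fun ν ↦ n - ν - 1) (fun i ↦ n - i - 1) ?_ ?_ ?_ ?_ ?_ <;>
    intros <;> simp_all <;> omega

theorem fwdDiff_iter_choose_apply_self (n r : ℕ) :
    (Δ_[1])^[n] (fun x : ℕ ↦ (x.choose r : ℤ)) r = r.choose n := by
  rcases le_or_gt n r with hnr | hrn
  · obtain ⟨j, rfl⟩ := Nat.exists_eq_add_of_le hnr
    rw [fwdDiff_iter_choose, Nat.choose_symm_add]
  · obtain ⟨j, rfl⟩ := Nat.exists_eq_add_of_lt hrn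
    have hr : (Δ_[1])^[r] (fun x : ℕ ↦ (x.choose r : ℤ)) = fun _ ↦ 1 := by
      simpa only [add_zero, Nat.choose_zero_right, Nat.cast_one] using fwdDiff_iter_choose 0 r
    rw [Nat.choose_eq_zero_of_lt hrn, show r + j + 1 = j + 1 + r by omega,
      Function.iterate_add_apply, hr, Function.iterate_succ_apply, fwdDiff_const]
    simp [fwdDiff_iter_eq_sum_shift]

theorem alternating_sum_choose_mul_add_choose (n r : ℕ) :
    ∑ i ∈ range (n + 1), (-1 : ℤ) ^ i * n.choose i * (i + r).choose r =
      (-1) ^ n * r.choose n := by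
  rw [← fwdDiff_iter_choose_apply_self, fwdDiff_iter_eq_sum_shift, mul_sum]
  refine sum_congr rfl fun i hi ↦ ?_
  have hi : i ≤ n := Nat.lt_succ_iff.mp (mem_range.mp hi)
  rw [smul_eq_mul, nsmul_one, Nat.cast_id, add_comm r i, ← mul_assoc, ← mul_assoc, ← pow_add,
    neg_one_pow_eq_of_mod_two_eq (show (n + (n - i)) % 2 = i % 2 by omega)]

theorem Polynomial.Sequence.basis_repr_eq_zero_of_natDegree_lt {R : Type*} [Ring R] [IsDomain R]
    (S : Sequence R) (hCoeff : ∀ i, IsUnit (S i).leadingCoeff) {q : R[X]} {j : ℕ}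
    (h : q.natDegree < j) : (S.basis hCoeff).repr q j = 0 := by
  have hq : q ∈ Submodule.span R (S.basis hCoeff '' Set.Iic q.natDegree) := by
    have hb : ⇑(S.basis hCoeff) = ⇑S := _root_.funext (S.basis_eq_self hCoeff)
    rw [hb, S.span_degreeLE fun i _ ↦ hCoeff i, mem_degreeLE]
    exact degree_le_natDegree
  rw [Module.Basis.mem_span_image] at hq
  by_contra hj
  exact absurd (hq (Finsupp.mem_support_iff.mpr hj)) (by simpa using h)

theorem Polynomial.eq_of_orthonormal {K : Type*} [Field K] [LinearOrder K] [IsStrictOrderedRing K]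
    (B : LinearMap.BilinForm K K[X]) {l : ℕ → K[X]} (hdeg : ∀ m, (l m).natDegree = m)
    (hlead : ∀ m, 0 < (l m).leadingCoeff)
    (horth : ∀ m j, B (l m) (l j) = if m = j then 1 else 0)
    {n : ℕ} {p : K[X]} (hp_deg : p.natDegree = n) (hp_lead : 0 < p.leadingCoeff)
    (hp_orth : ∀ q : K[X], q.natDegree < n → B q p = 0) (hp_norm : B p p = 1) : l n = p := by
  have hl0 (m : ℕ) : l m ≠ 0 := leadingCoeff_ne_zero.mp (hlead m).ne'
  let S : Sequence K := ⟨l, fun m ↦ by rw [degree_eq_natDegree (hl0 m), hdeg]⟩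
  have hunit (m : ℕ) : IsUnit (S m).leadingCoeff := isUnit_iff_ne_zero.mpr (hlead m).ne'
  set b := S.basis hunit
  have hrepr (i : ℕ) (q : K[X]) : b.repr q i = B (l i) q := by
    have : Finsupp.lapply i ∘ₗ b.repr.toLinearMap = B (l i) := b.ext fun j ↦ by
      rw [LinearMap.comp_apply, LinearEquiv.coe_coe, b.repr_self, Finsupp.lapply_apply,
        Finsupp.single_apply, show b j = l j from S.basis_eq_self hunit j, horth]
      exact if_congr eq_comm rfl rfl
    exact LinearMap.congr_fun this q
  set a := b.repr p n
  have hp : p = a • l n := b.ext_elem fun i ↦ by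
    rcases lt_trichotomy i n with hin | rfl | hni
    · simp [hrepr, hp_orth _ ((hdeg i).trans_lt hin), horth, hin.ne]
    · simp [a, hrepr, horth]
    · rw [S.basis_repr_eq_zero_of_natDegree_lt hunit (hp_deg.trans_lt hni)]
      simp [hrepr, horth, hni.ne']
  have ha_sq : a * a = 1 := by simpa [hp, horth] using hp_norm
  have ha_pos : 0 < a := by
    rw [hp, smul_eq_C_mul, leadingCoeff_mul, leadingCoeff_C] at hp_lead
    exact pos_of_mul_pos_left hp_lead (hlead n).le
  rw [hp, (mul_self_eq_one_iff.mp ha_sq).resolve_right (by linarith), one_smul]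

theorem integrableOn_pow_mul_exp_neg (i : ℕ) :
    IntegrableOn (fun t : ℝ ↦ t ^ i * exp (-t)) (Ioi 0) := by
  refine (GammaIntegral_convergent (by positivity : (0 : ℝ) < i + 1)).congr_fun
    (fun t _ ↦ ?_) measurableSet_Ioi
  simp [rpow_natCast, mul_comm]

theorem integral_pow_mul_exp_neg (i : ℕ) : ∫ t in Ioi (0 : ℝ), t ^ i * exp (-t) = i ! := by
  rw [← Gamma_nat_eq_factorial, Gamma_eq_integral (by positivity)]
  refine setIntegral_congr_fun measurableSet_Ioi fun t _ ↦ ?_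
  simp [rpow_natCast, mul_comm]

theorem Polynomial.integrableOn_eval_mul_exp_neg (P : ℝ[X]) :
    IntegrableOn (fun t ↦ P.eval t * exp (-t)) (Ioi 0) := by
  simp_rw [eval_eq_sum_range, sum_mul, mul_assoc]
  exact integrable_finsetSum _ fun i _ ↦ (integrableOn_pow_mul_exp_neg i).const_mul _

namespace Polynomial

noncomputable def laguerreFunctional : ℝ[X] →ₗ[ℝ] ℝ where
  toFun P := ∫ t in Ioi 0, P.eval t * exp (-t)
  map_add' P Q := by
    simp only [eval_add, add_mul]
    exact integral_add (integrableOn_eval_mul_exp_neg P) (integrableOn_eval_mul_exp_neg Q)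
  map_smul' c P := by
    simp only [eval_smul, smul_eq_mul, mul_assoc, integral_const_mul, RingHom.id_apply]

theorem laguerreFunctional_X_pow (i : ℕ) : laguerreFunctional (X ^ i) = i ! := by
  simp [laguerreFunctional, integral_pow_mul_exp_neg]

noncomputable def laguerreForm : LinearMap.BilinForm ℝ ℝ[X] :=
  (LinearMap.mul ℝ ℝ[X]).compr₂ laguerreFunctional

theorem laguerreForm_apply (P Q : ℝ[X]) :
    laguerreForm P Q = ∫ t in Ioi 0, P.eval t * Q.eval t * exp (-t) := by
  simp [laguerreForm, laguerreFunctional]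

noncomputable def laguerre (n : ℕ) : ℝ[X] :=
  ∑ i ∈ range (n + 1), ((-1) ^ i * n.choose i / i ! : ℝ) • X ^ i

theorem coeff_laguerre (n i : ℕ) : (laguerre n).coeff i = (-1) ^ i * n.choose i / i ! := by
  rw [laguerre, finsetSum_coeff, sum_eq_single i]
  · simp
  · intro j _ hji
    simp [coeff_X_pow, hji.symm]
  · intro hi
    simp [Nat.choose_eq_zero_of_lt (by simpa using hi : n < i)]

theorem natDegree_laguerre (n : ℕ) : (laguerre n).natDegree = n := by
  refine natDegree_eq_of_le_of_coeff_ne_zero ?_ (by simp [coeff_laguerre, factorial_ne_zero])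
  exact natDegree_le_iff_coeff_eq_zero.2 fun i hi ↦ by
    simp [coeff_laguerre, Nat.choose_eq_zero_of_lt (by exact_mod_cast hi : n < i)]

theorem leadingCoeff_laguerre (n : ℕ) : (laguerre n).leadingCoeff = (-1) ^ n / n ! := by
  simp [leadingCoeff, natDegree_laguerre, coeff_laguerre]

theorem laguerreForm_X_pow_laguerre (r n : ℕ) :
    laguerreForm (X ^ r) (laguerre n) = (-1) ^ n * r ! * r.choose n := by
  have hfac (i : ℕ) : ((i + r)! : ℝ) / i ! = r ! * (i + r).choose r := by
    rw [← add_choose_mul_factorial_mul_factorial i r]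
    push_cast
    field_simp
  have halt : ∑ i ∈ range (n + 1), (-1 : ℝ) ^ i * n.choose i * (i + r).choose r =
      (-1) ^ n * r.choose n := by
    exact_mod_cast alternating_sum_choose_mul_add_choose n r
  simp only [laguerreForm, LinearMap.compr₂_apply, LinearMap.mul_apply', laguerre, map_sum,
    map_smul, ← pow_add, laguerreFunctional_X_pow, smul_eq_mul]
  calc ∑ i ∈ range (n + 1), (-1) ^ i * n.choose i / i ! * ((r + i)! : ℝ)
      = r ! * ∑ i ∈ range (n + 1), (-1 : ℝ) ^ i * n.choose i * (i + r).choose r := by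
        rw [mul_sum]
        refine sum_congr rfl fun i _ ↦ ?_
        rw [add_comm r i]
        linear_combination ((-1) ^ i * n.choose i : ℝ) * hfac i
    _ = (-1) ^ n * r ! * r.choose n := by rw [halt]; ring

theorem laguerreForm_laguerre_of_natDegree_lt {q : ℝ[X]} {n : ℕ} (hq : q.natDegree < n) :
    laguerreForm q (laguerre n) = 0 := by
  rw [q.as_sum_range' n hq]
  simp only [← smul_X_eq_monomial, map_sum, map_smul, LinearMap.sum_apply,
    LinearMap.smul_apply, laguerreForm_X_pow_laguerre]
  exact sum_eq_zero fun r hr ↦ by simp [Nat.choose_eq_zero_of_lt (mem_range.mp hr)]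

theorem laguerreForm_laguerre_self (n : ℕ) : laguerreForm (laguerre n) (laguerre n) = 1 := by
  conv_lhs => arg 1; rw [laguerre]
  simp only [map_sum, map_smul, LinearMap.sum_apply, LinearMap.smul_apply,
    laguerreForm_X_pow_laguerre, smul_eq_mul]
  rw [sum_range_succ, sum_eq_zero fun i hi ↦ by
    simp [Nat.choose_eq_zero_of_lt (mem_range.mp hi)]]
  have hsq : ((-1 : ℝ) ^ n) ^ 2 = 1 := by rw [← pow_mul, mul_comm, pow_mul]; simp
  simp only [zero_add, Nat.choose_self, cast_one, mul_one]
  field_simp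
  exact hsq

theorem eq_neg_one_pow_smul_laguerre {l : ℕ → ℝ[X]} (hdeg : ∀ m, (l m).natDegree = m)
    (hlead : ∀ m, 0 < (l m).leadingCoeff)
    (horth : ∀ m j, laguerreForm (l m) (l j) = if m = j then 1 else 0) (n : ℕ) :
    l n = (-1 : ℝ) ^ n • laguerre n := by
  have hsign : (-1 : ℝ) ^ n * (-1) ^ n = 1 := by rw [← mul_pow]; simp
  refine eq_of_orthonormal laguerreForm hdeg hlead horth ?_ ?_ ?_ ?_
  · rw [smul_eq_C_mul, natDegree_C_mul (by simp), natDegree_laguerre]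
  · rw [smul_eq_C_mul, leadingCoeff_mul, leadingCoeff_C, leadingCoeff_laguerre, ← mul_div_assoc,
      hsign]
    positivity
  · intro q hq
    rw [map_smul, laguerreForm_laguerre_of_natDegree_lt hq, smul_zero]
  · rw [map_smul, map_smul, LinearMap.smul_apply, laguerreForm_laguerre_self, smul_eq_mul,
      smul_eq_mul, mul_one, hsign]

theorem derivative_laguerre (n : ℕ) : derivative (laguerre n) = -∑ μ ∈ range n, laguerre μ := by
  ext j
  have hockey : ∑ μ ∈ range n, (μ.choose j : ℝ) = n.choose (j + 1) := by
    exact_mod_cast Nat.sum_range_choose_eq_choose_succ n j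
  simp only [coeff_derivative, coeff_neg, finsetSum_coeff, coeff_laguerre, ← sum_div,
    ← mul_sum, hockey, factorial_succ, cast_mul, pow_succ]
  field_simp
  push_cast
  ring

theorem iterate_derivative_laguerre (n k : ℕ) :
    derivative^[k + 1] (laguerre n) =
      (-1 : ℝ) ^ (k + 1) • ∑ ν ∈ range n, ((n - ν - 1).choose k : ℝ) • laguerre ν := by
  induction k with
  | zero => simp [derivative_laguerre]
  | succ k ih =>
    have swap : ∑ ν ∈ range n, ∑ μ ∈ range ν, ((n - ν - 1).choose k : ℝ) • laguerre μ =
        ∑ μ ∈ range n, ∑ ν ∈ Ioo μ n, ((n - ν - 1).choose k : ℝ) • laguerre μ :=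
      sum_comm' fun ν μ ↦ by simp only [Finset.mem_range, Finset.mem_Ioo]; omega
    rw [Function.iterate_succ_apply', ih, derivative_smul, map_sum]
    simp only [derivative_smul, derivative_laguerre, smul_neg, sum_neg_distrib, smul_sum, swap,
      ← sum_smul, ← Nat.cast_sum, Nat.sum_Ioo_choose_sub_sub_one, pow_succ _ (k + 1), mul_neg_one,
      neg_smul]

end Polynomial

theorem orthonormal_laguerre_kth_derivative
    (l : ℕ → Polynomial ℝ)
    (hdeg : ∀ m, (l m).natDegree = m)
    (hlead : ∀ m, 0 < (l m).leadingCoeff)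
    (horth : ∀ m j, ∫ t in Set.Ioi (0 : ℝ),
        (l m).eval t * (l j).eval t * Real.exp (-t) = if m = j then 1 else 0)
    (n k : ℕ) (hk1 : 1 ≤ k) (hkn : k ≤ n) :
    (Polynomial.derivative^[k]) (l n) =
      ∑ ν ∈ Finset.range (n - k + 1),
        ((-1 : ℝ) ^ (n - k) * (-1 : ℝ) ^ ν * (Nat.choose (n - ν - 1) (k - 1) : ℝ)) • l ν := by
  have hl := eq_neg_one_pow_smul_laguerre hdeg hlead fun m j ↦ by
    rw [laguerreForm_apply, horth]
  obtain ⟨k, rfl⟩ := Nat.exists_eq_add_of_le' hk1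
  have htrunc : ∑ ν ∈ range (n - (k + 1) + 1), ((n - ν - 1).choose k : ℝ) • laguerre ν =
      ∑ ν ∈ range n, ((n - ν - 1).choose k : ℝ) • laguerre ν :=
    sum_subset (range_subset_range.mpr (by omega)) fun ν hν hν' ↦ by
      rw [Finset.mem_range] at hν hν'
      rw [Nat.choose_eq_zero_of_lt (by omega), cast_zero, zero_smul]
  rw [hl, iterate_derivative_smul, iterate_derivative_laguerre, ← htrunc, smul_sum, smul_sum]
  refine sum_congr rfl fun ν _ ↦ ?_
  rw [hl, smul_smul, smul_smul, smul_smul, Nat.add_sub_cancel]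
  congr 1
  have hsign : (-1 : ℝ) ^ n * (-1) ^ (k + 1) = (-1) ^ (n - (k + 1)) * (-1) ^ ν * (-1) ^ ν := by
    simp only [← pow_add]
    exact neg_one_pow_eq_of_mod_two_eq (by omega)
  linear_combination ((n - ν - 1).choose k : ℝ) * hsign
end

section
/- For generalized Laguerre polynomials, the expansion L_n^β(t) = Σ_{ν=0}^n ((β-α)_{n-ν}/(n-ν)!) L_ν^α(t) holds, where (x)_k denotes the Pochhammer symbol. -/
/-!
Writing `(x)_m / m!` as the multiset coefficient `multichoose x m`, the coefficient of `t^i` in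
`L_n^s` is `(-1)^i / i! · multichoose (s + i + 1) (n - i)`. Since
`β + i + 1 = (α + i + 1) + (β - α)`, comparing coefficients of `t^i` reduces the expansion to the
Chu–Vandermonde convolution for `multichoose`.
-/

open Polynomial

/-- The generalized Laguerre polynomial `L_n^s(t) = Σ_{i=0}^n (-1)^i C(n+s, n-i) t^i / i!`,
where `C(n+s, n-i) = (s+i+1)_{n-i}/(n-i)!`. -/
noncomputable def genLaguerre (s : ℝ) (n : ℕ) : Polynomial ℝ :=
  ∑ i ∈ Finset.range (n + 1),
    C ((-1 : ℝ) ^ i * (ascPochhammer ℝ (n - i)).eval (s + i + 1) /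
        (((n - i).factorial : ℝ) * (i.factorial : ℝ))) * X ^ i

open Finset

namespace Ring

/-- Follows from Chu–Vandermonde for `choose` via `choose (-r) k = (-1)^k • multichoose r k`. -/
theorem multichoose_add_eq {R : Type*} [CommRing R] [BinomialRing R] (r s : R) (k : ℕ) :
    multichoose (r + s) k = ∑ ij ∈ antidiagonal k, multichoose r ij.1 * multichoose s ij.2 := by
  have h := add_choose_eq (r := -r) (s := -s) k (Commute.all _ _)
  rw [← neg_add, choose_neg'] at h
  simp only [choose_neg', smul_mul_smul_comm, ← Int.negOnePow_add] at h
  rw [← smul_left_cancel_iff (Int.negOnePow k), h, smul_sum]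
  refine sum_congr rfl fun ij hij => ?_
  rw [← Nat.cast_add, mem_antidiagonal.mp hij]

theorem multichoose_eq_eval_ascPochhammer_div {K : Type*} [Field K] [CharZero K] (x : K) (n : ℕ) :
    multichoose x n = (ascPochhammer K n).eval x / n.factorial := by
  rw [eq_div_iff (Nat.cast_ne_zero.mpr n.factorial_ne_zero), mul_comm, ← nsmul_eq_mul,
    factorial_nsmul_multichoose_eq_ascPochhammer, ascPochhammer_smeval_eq_eval]

end Ring

theorem coeff_genLaguerre (s : ℝ) (n i : ℕ) :
    (genLaguerre s n).coeff i =
      if i ≤ n then (-1) ^ i / i.factorial * Ring.multichoose (s + i + 1) (n - i) else 0 := by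
  simp only [genLaguerre, finsetSum_coeff, coeff_C_mul_X_pow, sum_ite_eq, mem_range,
    Nat.lt_succ_iff, Ring.multichoose_eq_eval_ascPochhammer_div]
  split_ifs <;> ring

theorem coeff_genLaguerre_of_lt (s : ℝ) {n i : ℕ} (h : n < i) : (genLaguerre s n).coeff i = 0 := by
  rw [coeff_genLaguerre, if_neg (not_le.mpr h)]

theorem coeff_genLaguerre_add (s : ℝ) (i p : ℕ) :
    (genLaguerre s (i + p)).coeff i = (-1) ^ i / i.factorial * Ring.multichoose (s + i + 1) p := by
  rw [coeff_genLaguerre, if_pos (Nat.le_add_right i p), Nat.add_sub_cancel_left]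

theorem genLaguerre_connection (α β : ℝ) (n : ℕ) :
    genLaguerre β n =
      ∑ ν ∈ Finset.range (n + 1),
        ((ascPochhammer ℝ (n - ν)).eval (β - α) / ((n - ν).factorial : ℝ)) •
          genLaguerre α ν := by
  simp only [← Ring.multichoose_eq_eval_ascPochhammer_div]
  ext i
  simp only [finsetSum_coeff, coeff_smul, smul_eq_mul]
  rcases lt_or_ge n i with hni | hin
  · rw [coeff_genLaguerre_of_lt β hni]
    refine (sum_eq_zero fun ν hν => ?_).symm
    rw [coeff_genLaguerre_of_lt α ((Nat.lt_succ_iff.mp (mem_range.mp hν)).trans_lt hni), mul_zero]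
  obtain ⟨p, rfl⟩ := Nat.exists_eq_add_of_le hin
  have hβ : β + i + 1 = (α + i + 1) + (β - α) := by ring
  rw [add_assoc, sum_range_add, sum_eq_zero fun ν hν => by
      rw [coeff_genLaguerre_of_lt α (mem_range.mp hν), mul_zero],
    zero_add, coeff_genLaguerre_add, hβ, Ring.multichoose_add_eq,
    Nat.sum_antidiagonal_eq_sum_range_succ_mk, mul_sum]
  refine sum_congr rfl fun k _ => ?_
  rw [coeff_genLaguerre_add, Nat.add_sub_add_left]
  ring
end

section
/- The minimal eigenvalue of the n×n symmetric tridiagonal matrix C with C_{1,1}=1, C_{i,i}=2 for 2 ≤ i ≤ n, and C_{i,i±1}=1 equals 4 sin²(π/(2(2n+1))). -/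
open Matrix Finset Real

noncomputable def ww (n : ℕ) : ℕ → ℝ := fun a => Real.cos ((2*a+1) * Real.pi / (2*(2*n+1)))
noncomputable def mu0 (n : ℕ) : ℝ := 2 - 2 * Real.cos (Real.pi / (2*n+1))

lemma ww_pos {n a : ℕ} (h : a < n) : 0 < ww n a := by
  apply Real.cos_pos_of_mem_Ioo
  have hπ := Real.pi_pos
  have ha : (a:ℝ) < n := by exact_mod_cast h
  constructor
  · have : 0 < (2*(a:ℝ)+1) * Real.pi / (2*(2*n+1)) := by positivity
    linarith
  · show (2*(a:ℝ)+1) * Real.pi / (2*(2*(n:ℝ)+1)) < Real.pi/2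
    rw [div_lt_div_iff₀ (by positivity) (by norm_num)]
    nlinarith

lemma ww_top (n : ℕ) : ww n n = 0 := by
  have : (2*(n:ℝ)+1) * Real.pi / (2*(2*n+1)) = Real.pi/2 := by
    have : (2*(n:ℝ)+1) ≠ 0 := by positivity
    field_simp
  unfold ww
  rw [this, Real.cos_pi_div_two]

lemma cos_rec (x t : ℝ) : Real.cos (x+t) + Real.cos (x-t) = 2 * Real.cos t * Real.cos x := by
  rw [Real.cos_add, Real.cos_sub]; ring

lemma ww_eq (n a : ℕ) : ww n a = Real.cos (Real.pi/(2*(2*n+1)) + a * (Real.pi/(2*n+1))) := by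
  unfold ww
  congr 1
  have h1 : (2*(n:ℝ)+1) ≠ 0 := by positivity
  field_simp
  ring

lemma ww_rec (n a : ℕ) : 2 * ww n a - ww n (a+1) - ww n (a-1) = mu0 n * ww n a := by
  set t := Real.pi/(2*(n:ℝ)+1) with ht
  have hn0 : (2*(n:ℝ)+1) ≠ 0 := by positivity
  have hhalf : Real.pi/(2*(2*(n:ℝ)+1)) = t/2 := by rw [ht]; rw [div_div]; congr 1; ring
  have hw : ∀ b : ℕ, ww n b = Real.cos (t/2 + b * t) := by
    intro b; rw [ww_eq, hhalf]
  have hmu : mu0 n = 2 - 2 * Real.cos t := rfl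
  rcases a with _ | b
  · simp only [Nat.zero_sub, hw, hmu]
    have k := cos_rec (t/2) t
    have h1 : t/2 + t = t/2 + (1:ℕ)*t := by push_cast; ring
    have h2 : t/2 - t = -(t/2) := by ring
    rw [h1] at k
    rw [h2, Real.cos_neg] at k
    push_cast
    push_cast at k
    simp only [zero_mul, add_zero] at *
    linarith [k]
  · have k := cos_rec (t/2 + (b+1) * t) t
    have h1 : t/2 + ((b:ℝ)+1)*t + t = t/2 + ((b:ℝ)+1+1)*t := by ring
    have h2 : t/2 + ((b:ℝ)+1)*t - t = t/2 + (b:ℝ)*t := by ring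
    rw [h1, h2] at k
    simp only [hw, hmu, Nat.succ_sub_one]
    push_cast
    linarith [k]

lemma mu0_eq (n : ℕ) : mu0 n = 4 * Real.sin (Real.pi / (2*(2*(n:ℝ)+1))) ^ 2 := by
  have h : Real.pi / (2*(n:ℝ)+1) = 2 * (Real.pi / (2*(2*(n:ℝ)+1))) := by
    have : (2*(n:ℝ)+1) ≠ 0 := by positivity
    field_simp
  rw [mu0, h, Real.cos_two_mul, Real.cos_sq']
  ring

noncomputable def Xx {n : ℕ} (x : Fin n → ℝ) (a : ℕ) : ℝ := if h : a < n then x ⟨a,h⟩ else 0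

lemma Xx_lt {n : ℕ} (x : Fin n → ℝ) {a : ℕ} (h : a < n) : Xx x a = x ⟨a,h⟩ := dif_pos h

lemma Xx_ge {n : ℕ} (x : Fin n → ℝ) {a : ℕ} (h : n ≤ a) : Xx x a = 0 := dif_neg (by omega)

lemma row_sum {n : ℕ} (C : Matrix (Fin n) (Fin n) ℝ)
    (hC : ∀ i j : Fin n, C i j =
      if i = j then (if i.val = 0 then 1 else 2)
      else if i.val + 1 = j.val ∨ j.val + 1 = i.val then 1 else 0)
    (x : Fin n → ℝ) (i : Fin n) :
    C.mulVec x i = (if (i:ℕ) = 0 then 1 else 2) * Xx x i + Xx x ((i:ℕ)+1)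
      + (if (i:ℕ) = 0 then 0 else Xx x ((i:ℕ)-1)) := by
  have key : C.mulVec x i = ∑ b ∈ range n,
      ((if (i:ℕ) = b then (if (i:ℕ) = 0 then 1 else 2) * Xx x b else 0)
      + (if (i:ℕ)+1 = b then Xx x b else 0)
      + (if b+1 = (i:ℕ) then Xx x b else 0)) := by
    rw [Matrix.mulVec, dotProduct, ← Fin.sum_univ_eq_sum_range]
    apply Finset.sum_congr rfl
    intro j _
    rw [hC, Xx_lt x j.isLt]
    have : (i = j) ↔ ((i:ℕ) = (j:ℕ)) := Fin.ext_iff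
    simp only [this]
    split_ifs <;> (try (exfalso; omega)) <;> ring
  rw [key]
  rw [Finset.sum_add_distrib, Finset.sum_add_distrib]
  congr 1
  congr 1
  · rw [Finset.sum_ite_eq (range n) (i:ℕ) (fun b => (if (i:ℕ) = 0 then 1 else 2) * Xx x b)]
    rw [if_pos (mem_range.mpr i.isLt)]
  · rw [Finset.sum_ite_eq (range n) ((i:ℕ)+1) (fun b => Xx x b)]
    by_cases h : (i:ℕ)+1 < n
    · rw [if_pos (mem_range.mpr h)]
    · rw [if_neg (by simpa using h), Xx_ge x (by omega)]
  · rcases Nat.eq_zero_or_pos (i:ℕ) with h0 | h0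
    · rw [if_pos h0]
      apply Finset.sum_eq_zero
      intro b _
      rw [if_neg (by omega)]
    · rw [if_neg (by omega)]
      have : ∀ b ∈ range n, (if b+1 = (i:ℕ) then Xx x b else 0)
          = (if (i:ℕ)-1 = b then Xx x b else 0) := by
        intro b _; congr 1; simp only [eq_iff_iff]; omega
      rw [Finset.sum_congr rfl this,
        Finset.sum_ite_eq (range n) ((i:ℕ)-1) (fun b => Xx x b),
        if_pos (mem_range.mpr (by omega))]

theorem min_eigenvalue_tridiagonal (n : ℕ) (hn : 1 ≤ n)
    (C : Matrix (Fin n) (Fin n) ℝ)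
    (hC : ∀ i j : Fin n, C i j =
      if i = j then (if i.val = 0 then 1 else 2)
      else if i.val + 1 = j.val ∨ j.val + 1 = i.val then 1 else 0) :
    IsLeast {μ : ℝ | ∃ v : Fin n → ℝ, v ≠ 0 ∧ C.mulVec v = μ • v}
      (4 * Real.sin (Real.pi / (2 * (2 * n + 1))) ^ 2) := by
  rw [show (4 * Real.sin (Real.pi / (2 * (2 * (n:ℝ) + 1))) ^ 2) = mu0 n from (mu0_eq n).symm]
  constructor
  · -- membership
    refine ⟨fun i => (-1)^(i:ℕ) * ww n (i:ℕ), ?_, ?_⟩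
    · intro h0
      have h1 := congrFun h0 ⟨0, hn⟩
      simp only [Pi.zero_apply] at h1
      have h2 := ww_pos hn
      norm_num at h1
      rw [h1] at h2
      exact lt_irrefl _ h2
    · funext i
      rw [row_sum C hC]
      have hX : ∀ b, b ≤ n → Xx (fun i : Fin n => (-1)^(i:ℕ) * ww n (i:ℕ)) b
          = (-1)^b * ww n b := by
        intro b hb
        rcases lt_or_eq_of_le hb with h | h
        · rw [Xx_lt _ h]
        · subst h; rw [Xx_ge _ le_rfl, ww_top]; ring
      obtain ⟨a, ha⟩ := i
      simp only [Pi.smul_apply, smul_eq_mul]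
      rw [hX a (le_of_lt ha), hX (a+1) (by omega)]
      rcases a with _ | b
      · have hr := ww_rec n 0
        simp only [Nat.zero_sub] at hr
        norm_num
        linarith [hr]
      · rw [if_neg (by omega), if_neg (by omega)]
        simp only [Nat.add_sub_cancel]
        rw [hX b (by omega)]
        have hr := ww_rec n (b+1)
        simp only [Nat.succ_sub_one] at hr
        have e1 : ((-1:ℝ))^(b+1) = -(-1:ℝ)^b := by rw [pow_succ]; ring
        have e2 : ((-1:ℝ))^(b+1+1) = (-1:ℝ)^b := by rw [pow_succ, pow_succ]; ring
        rw [e1, e2]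
        linear_combination (-(-1:ℝ)^b) * hr
  · -- lower bound
    rintro μ ⟨v, hv, hev⟩
    set U : ℕ → ℝ := fun a => (-1)^a * Xx v a with hU
    set W : ℕ → ℝ := ww n with hWdef
    have hUz : ∀ a, n ≤ a → U a = 0 := by
      intro a h; simp [hU, Xx_ge v h]
    have hE : ∀ a, a < n → 2*U a - U (a+1) - U (a-1) = μ * U a := by
      intro a ha
      have h1 := congrFun hev ⟨a, ha⟩
      rw [row_sum C hC] at h1
      simp only [Pi.smul_apply, smul_eq_mul] at h1
      have hxa : v ⟨a, ha⟩ = Xx v a := (Xx_lt v ha).symm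
      rw [hxa] at h1
      rcases a with _ | b
      · simp only [hU]
        norm_num at h1 ⊢
        linarith [h1]
      · rw [if_neg (by omega), if_neg (by omega)] at h1
        simp only [Nat.add_sub_cancel] at h1
        simp only [hU, Nat.succ_sub_one, Nat.add_sub_cancel]
        have e1 : ((-1:ℝ))^(b+1) = -(-1:ℝ)^b := by rw [pow_succ]; ring
        have e2 : ((-1:ℝ))^(b+1+1) = (-1:ℝ)^b := by rw [pow_succ, pow_succ]; ring
        rw [e1, e2]
        linear_combination (-(-1:ℝ)^b) * h1
    have hW : ∀ a, 2*W a - W (a+1) - W (a-1) = mu0 n * W a := ww_rec n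
    set D : ℕ → ℝ := fun a => U a * W (a+1) - U (a+1) * W a with hD
    have hWpos : ∀ a, a < n → 0 < W a := fun a h => ww_pos h
    have step1 : ∀ a ∈ range n, (μ - mu0 n) * U a^2
        = (U a * (D a + (W (a-1) * U a - U (a-1) * W a))) / W a := by
      intro a ha
      rw [mem_range] at ha
      have hw := hWpos a ha
      rw [eq_div_iff hw.ne']
      have e1 := hE a ha
      have e2 := hW a
      simp only [hD]
      linear_combination U a * U a * e2 - W a * U a * e1
    have main : (μ - mu0 n) * (∑ a ∈ range n, U a^2)
        = ∑ a ∈ range (n-1), D a^2 / (W a * W (a+1)) := by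
      rw [Finset.mul_sum, Finset.sum_congr rfl step1]
      have split : ∀ a ∈ range n,
          (U a * (D a + (W (a-1) * U a - U (a-1) * W a))) / W a
          = U a * D a / W a + U a * (W (a-1) * U a - U (a-1) * W a) / W a := by
        intro a _; ring
      rw [Finset.sum_congr rfl split, Finset.sum_add_distrib]
      obtain ⟨m, hm⟩ : ∃ m, n = m + 1 := ⟨n-1, by omega⟩
      subst hm
      simp only [Nat.add_sub_cancel]
      rw [Finset.sum_range_succ, Finset.sum_range_succ']
      have hDm : D m = 0 := by
        simp only [hD]
        rw [hUz (m+1) le_rfl, hWdef, ww_top]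
        ring
      have hP0 : U 0 * (W (0-1) * U 0 - U (0-1) * W 0) / W 0 = 0 := by
        show U 0 * (W 0 * U 0 - U 0 * W 0) / W 0 = 0
        have : W 0 * U 0 - U 0 * W 0 = 0 := by ring
        rw [this, mul_zero, zero_div]
      rw [hDm, hP0]
      rw [mul_zero, zero_div, add_zero, add_zero, ← Finset.sum_add_distrib]
      apply Finset.sum_congr rfl
      intro a ha
      rw [mem_range] at ha
      have hwa := hWpos a (by omega)
      have hwa1 := hWpos (a+1) (by omega)
      have hsub : (a+1) - 1 = a := rfl
      simp only [hD, hsub]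
      field_simp
      ring
    have hR : 0 ≤ ∑ a ∈ range (n-1), D a^2 / (W a * W (a+1)) := by
      apply Finset.sum_nonneg
      intro a ha
      rw [mem_range] at ha
      have h1 := hWpos a (by omega)
      have h2 := hWpos (a+1) (by omega)
      positivity
    have hS : 0 < ∑ a ∈ range n, U a^2 := by
      obtain ⟨i, hi⟩ := Function.ne_iff.mp hv
      have hXi : Xx v (i:ℕ) = v i := by
        rw [Xx_lt v i.isLt]
      have hUi : U (i:ℕ) ≠ 0 := by
        simp only [hU, hXi]
        intro h
        rcases mul_eq_zero.mp h with h | h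
        · exact absurd h (by positivity)
        · exact hi h
      have h1 : U (i:ℕ)^2 ≤ ∑ a ∈ range n, U a^2 :=
        Finset.single_le_sum (fun a _ => sq_nonneg (U a)) (mem_range.mpr i.isLt)
      have h2 : 0 < U (i:ℕ)^2 := by positivity
      linarith
    nlinarith [main, hR, hS]
end

section
/- For X = L²((0,∞), t^s e^{-t} dt) with s > -1, the best constant M_2(s) = sup over nonzero polynomials p of degree ≤ 2 of ‖p'‖_X/‖p‖_X equals √((3(s+2) + √((s+2)(s+10)))/(2(s+1)(s+2))). -/
open MeasureTheory

/-- The `L²((0,∞), t^s e^{-t} dt)` norm of a polynomial. -/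
noncomputable def genLaguerreNorm (s : ℝ) (p : Polynomial ℝ) : ℝ :=
  Real.sqrt (∫ t in Set.Ioi (0 : ℝ), (p.eval t) ^ 2 * t ^ s * Real.exp (-t))

private lemma gamma_integrable {s : ℝ} (hs : 0 < s + 1) :
    IntegrableOn (fun t : ℝ => Real.exp (-t) * t ^ s) (Set.Ioi (0:ℝ)) := by
  have := Real.GammaIntegral_convergent hs
  simpa using this

private lemma gamma_int {s : ℝ} (hs : 0 < s + 1) :
    ∫ t in Set.Ioi (0:ℝ), Real.exp (-t) * t ^ s = Real.Gamma (s + 1) := by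
  rw [Real.Gamma_eq_integral hs]
  simp

private lemma integral_quadratic (s : ℝ) (hs : -1 < s) (a b c : ℝ) :
    ∫ t in Set.Ioi (0:ℝ), (a + b * t + c * t ^ 2) ^ 2 * t ^ s * Real.exp (-t)
      = Real.Gamma (s+1) * (a^2 + 2*a*b*(s+1) + (b^2+2*a*c)*((s+1)*(s+2))
          + 2*b*c*((s+1)*(s+2)*(s+3)) + c^2*((s+1)*(s+2)*(s+3)*(s+4))) := by
  have hs1 : (0:ℝ) < s + 1 := by linarith
  have hcong : Set.EqOn (fun t : ℝ => (a + b * t + c * t ^ 2) ^ 2 * t ^ s * Real.exp (-t))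
      (fun t : ℝ => a^2 * (Real.exp (-t) * t ^ s) + (2*a*b) * (Real.exp (-t) * t ^ (s+1))
        + (b^2+2*a*c) * (Real.exp (-t) * t ^ (s+2)) + (2*b*c) * (Real.exp (-t) * t ^ (s+3))
        + c^2 * (Real.exp (-t) * t ^ (s+4))) (Set.Ioi 0) := by
    intro t ht
    have ht' : (0:ℝ) < t := ht
    have e1 : t ^ (s+1) = t ^ s * t := Real.rpow_add_one (ne_of_gt ht') s
    have e2 : t ^ (s+2) = t ^ (s+1) * t := by
      rw [show s+2 = (s+1)+1 by ring]; exact Real.rpow_add_one (ne_of_gt ht') _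
    have e3 : t ^ (s+3) = t ^ (s+2) * t := by
      rw [show s+3 = (s+2)+1 by ring]; exact Real.rpow_add_one (ne_of_gt ht') _
    have e4 : t ^ (s+4) = t ^ (s+3) * t := by
      rw [show s+4 = (s+3)+1 by ring]; exact Real.rpow_add_one (ne_of_gt ht') _
    simp only [e4, e3, e2, e1]
    ring
  rw [setIntegral_congr_fun measurableSet_Ioi hcong]
  have i0 : IntegrableOn (fun t : ℝ => Real.exp (-t) * t ^ s) (Set.Ioi (0:ℝ)) :=
    gamma_integrable (by linarith)
  have i1 : IntegrableOn (fun t : ℝ => Real.exp (-t) * t ^ (s+1)) (Set.Ioi (0:ℝ)) :=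
    gamma_integrable (by linarith)
  have i2 : IntegrableOn (fun t : ℝ => Real.exp (-t) * t ^ (s+2)) (Set.Ioi (0:ℝ)) :=
    gamma_integrable (by linarith)
  have i3 : IntegrableOn (fun t : ℝ => Real.exp (-t) * t ^ (s+3)) (Set.Ioi (0:ℝ)) :=
    gamma_integrable (by linarith)
  have i4 : IntegrableOn (fun t : ℝ => Real.exp (-t) * t ^ (s+4)) (Set.Ioi (0:ℝ)) :=
    gamma_integrable (by linarith)
  have j1 : IntegrableOn (fun t : ℝ => a^2 * (Real.exp (-t) * t ^ s)
      + (2*a*b) * (Real.exp (-t) * t ^ (s+1))) (Set.Ioi (0:ℝ)) :=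
    (i0.const_mul _).add (i1.const_mul _)
  have j2 : IntegrableOn (fun t : ℝ => a^2 * (Real.exp (-t) * t ^ s)
      + (2*a*b) * (Real.exp (-t) * t ^ (s+1))
      + (b^2+2*a*c) * (Real.exp (-t) * t ^ (s+2))) (Set.Ioi (0:ℝ)) :=
    j1.add (i2.const_mul _)
  have j3 : IntegrableOn (fun t : ℝ => a^2 * (Real.exp (-t) * t ^ s)
      + (2*a*b) * (Real.exp (-t) * t ^ (s+1))
      + (b^2+2*a*c) * (Real.exp (-t) * t ^ (s+2))
      + (2*b*c) * (Real.exp (-t) * t ^ (s+3))) (Set.Ioi (0:ℝ)) :=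
    j2.add (i3.const_mul _)
  rw [integral_add j3 (i4.const_mul _), integral_add j2 (i3.const_mul _),
      integral_add j1 (i2.const_mul _), integral_add (i0.const_mul _) (i1.const_mul _),
      integral_const_mul, integral_const_mul, integral_const_mul, integral_const_mul,
      integral_const_mul]
  rw [gamma_int (by linarith : (0:ℝ) < s + 1),
      gamma_int (by linarith : (0:ℝ) < (s+1) + 1),
      gamma_int (by linarith : (0:ℝ) < (s+2) + 1),
      gamma_int (by linarith : (0:ℝ) < (s+3) + 1),
      gamma_int (by linarith : (0:ℝ) < (s+4) + 1)]
  have e12 : Real.Gamma (s+1+1) = (s+1) * Real.Gamma (s+1) :=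
    Real.Gamma_add_one (by linarith)
  have e23 : Real.Gamma (s+2+1) = (s+2) * Real.Gamma (s+2) :=
    Real.Gamma_add_one (by linarith)
  have e34 : Real.Gamma (s+3+1) = (s+3) * Real.Gamma (s+3) :=
    Real.Gamma_add_one (by linarith)
  have e45 : Real.Gamma (s+4+1) = (s+4) * Real.Gamma (s+4) :=
    Real.Gamma_add_one (by linarith)
  have f2 : Real.Gamma (s+2) = (s+1) * Real.Gamma (s+1) := by
    rw [show s+2 = s+1+1 by ring]; exact e12
  have f3 : Real.Gamma (s+3) = (s+2) * Real.Gamma (s+2) := by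
    rw [show s+3 = s+2+1 by ring]; exact e23
  have f4 : Real.Gamma (s+4) = (s+3) * Real.Gamma (s+3) := by
    rw [show s+4 = s+3+1 by ring]; exact e34
  rw [e45, e34, e23, e12, f4, f3, f2]
  ring

private lemma norm_formula (s : ℝ) (hs : -1 < s) (p : Polynomial ℝ) (a b c : ℝ)
    (h : ∀ t : ℝ, p.eval t = a + b * t + c * t ^ 2) :
    genLaguerreNorm s p = Real.sqrt (Real.Gamma (s+1) *
      (a^2 + 2*a*b*(s+1) + (b^2+2*a*c)*((s+1)*(s+2))
        + 2*b*c*((s+1)*(s+2)*(s+3)) + c^2*((s+1)*(s+2)*(s+3)*(s+4)))) := by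
  unfold genLaguerreNorm
  rw [setIntegral_congr_fun measurableSet_Ioi (fun t _ => by rw [h t]),
    integral_quadratic s hs a b c]

private lemma sos_pos (s a b c : ℝ) (hs1 : 0 < s+1) (hs2 : 0 < s+2)
    (h : a ≠ 0 ∨ b ≠ 0 ∨ c ≠ 0) :
    0 < (a+(s+1)*b+(s+1)*(s+2)*c)^2 + (s+1)*(b+2*(s+2)*c)^2 + 2*(s+1)*(s+2)*c^2 := by
  rcases eq_or_ne c 0 with hc | hc
  · rcases eq_or_ne b 0 with hb | hb
    · have ha : a ≠ 0 := by tauto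
      subst hc; subst hb
      have ha2 : 0 < a^2 := by positivity
      nlinarith [ha2]
    · subst hc
      have hb2 : 0 < b^2 := by positivity
      nlinarith [sq_nonneg (a+(s+1)*b+(s+1)*(s+2)*0), mul_pos hs1 hb2]
  · have hc2 : 0 < c^2 := by positivity
    nlinarith [sq_nonneg (a+(s+1)*b+(s+1)*(s+2)*c),
      mul_nonneg hs1.le (sq_nonneg (b+2*(s+2)*c)), mul_pos (mul_pos hs1 hs2) hc2]

theorem best_constant_deg_two (s : ℝ) (hs : s > -1) :
    sSup {r : ℝ | ∃ p : Polynomial ℝ, p ≠ 0 ∧ p.natDegree ≤ 2 ∧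
        r = genLaguerreNorm s p.derivative / genLaguerreNorm s p} =
      Real.sqrt ((3 * (s + 2) + Real.sqrt ((s + 2) * (s + 10))) /
        (2 * (s + 1) * (s + 2))) := by
  have hs1 : (0:ℝ) < s + 1 := by linarith
  have hs2 : (0:ℝ) < s + 2 := by linarith
  obtain ⟨r, hrdef⟩ : ∃ r', Real.sqrt ((s+2)*(s+10)) = r' := ⟨_, rfl⟩
  rw [hrdef]
  have hr0 : 0 ≤ r := hrdef ▸ Real.sqrt_nonneg _
  have hr2 : r^2 = (s+2)*(s+10) := by rw [← hrdef]; exact Real.sq_sqrt (by nlinarith)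
  obtain ⟨μ, hμdef⟩ : ∃ m, (3*(s+2)+r)/(2*(s+1)*(s+2)) = m := ⟨_, rfl⟩
  rw [hμdef]
  have hμ0 : 0 ≤ μ := hμdef ▸ div_nonneg (by linarith) (by positivity)
  have hg : 0 < Real.Gamma (s+1) := Real.Gamma_pos_of_pos hs1
  have hden : (0:ℝ) < 2*(s+1)*(s+2) := by positivity
  apply IsGreatest.csSup_eq
  constructor
  · -- membership: the extremal polynomial
    obtain ⟨A, hA⟩ : ∃ x, (s+1)*(s+2)*(s+6+r) = x := ⟨_, rfl⟩
    obtain ⟨B, hB⟩ : ∃ x, -(2*(s+2)*(s+4+r)) = x := ⟨_, rfl⟩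
    obtain ⟨C, hC⟩ : ∃ x, s+2+r = x := ⟨_, rfl⟩
    have hCpos : 0 < C := by rw [← hC]; linarith
    refine ⟨Polynomial.C A + Polynomial.C B * Polynomial.X + Polynomial.C C * Polynomial.X^2,
      ?_, ?_, ?_⟩
    · intro h
      have h2 := congrArg (fun q : Polynomial ℝ => q.coeff 2) h
      simp [Polynomial.coeff_add, Polynomial.coeff_C, Polynomial.coeff_C_mul,
        Polynomial.coeff_X, Polynomial.coeff_X_pow] at h2
      exact absurd h2 (ne_of_gt hCpos)
    · apply le_trans (Polynomial.natDegree_add_le _ _)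
      simp only [max_le_iff]
      constructor
      · exact le_trans (Polynomial.natDegree_add_le _ _) (by
          simp [Polynomial.natDegree_C]
          exact le_trans (Polynomial.natDegree_C_mul_le _ _) (by simp))
      · exact le_trans (Polynomial.natDegree_C_mul_le _ _) (by simp [Polynomial.natDegree_X_pow])
    · have hev : ∀ t : ℝ, (Polynomial.C A + Polynomial.C B * Polynomial.X
          + Polynomial.C C * Polynomial.X^2).eval t = A + B * t + C * t ^ 2 := by
        intro t; simp
      have hevd : ∀ t : ℝ, (Polynomial.derivative (Polynomial.C A + Polynomial.C B * Polynomial.X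
          + Polynomial.C C * Polynomial.X^2)).eval t = B + (2*C) * t + 0 * t ^ 2 := by
        intro t; simp; ring
      rw [norm_formula s hs _ B (2*C) 0 hevd, norm_formula s hs _ A B C hev]
      obtain ⟨Ep, hEp⟩ : ∃ x, A^2 + 2*A*B*(s+1) + (B^2+2*A*C)*((s+1)*(s+2))
        + 2*B*C*((s+1)*(s+2)*(s+3)) + C^2*((s+1)*(s+2)*(s+3)*(s+4)) = x := ⟨_, rfl⟩
      obtain ⟨Ed, hEd⟩ : ∃ x, B^2 + 2*B*(2*C)*(s+1) + ((2*C)^2+2*B*0)*((s+1)*(s+2))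
        + 2*(2*C)*0*((s+1)*(s+2)*(s+3)) + 0^2*((s+1)*(s+2)*(s+3)*(s+4)) = x := ⟨_, rfl⟩
      rw [hEp, hEd]
      have hEppos : 0 < Ep := by
        have hsos : Ep = (A+(s+1)*B+(s+1)*(s+2)*C)^2 + (s+1)*(B+2*(s+2)*C)^2
            + 2*(s+1)*(s+2)*C^2 := by rw [← hEp]; ring
        rw [hsos]
        exact sos_pos s A B C hs1 hs2 (Or.inr (Or.inr (ne_of_gt hCpos)))
      have key : Ed = μ * Ep := by
        rw [← hμdef, div_mul_eq_mul_div, eq_div_iff (ne_of_gt hden)]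
        rw [← hEd, ← hEp, ← hA, ← hB, ← hC]
        linear_combination (-2*(s+1)*(s+2)*(s+2+r))*hr2
      have hgp : 0 < Real.Gamma (s+1) * Ep := mul_pos hg hEppos
      rw [key, show Real.Gamma (s+1) * (μ * Ep) = μ * (Real.Gamma (s+1) * Ep) by ring,
        Real.sqrt_mul hμ0, mul_div_assoc, div_self (ne_of_gt (Real.sqrt_pos.mpr hgp)), mul_one]
  · -- upper bound
    rintro x ⟨p, hp, hdeg, rfl⟩
    obtain ⟨a, ha⟩ : ∃ a, p.coeff 0 = a := ⟨_, rfl⟩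
    obtain ⟨b, hb⟩ : ∃ b, p.coeff 1 = b := ⟨_, rfl⟩
    obtain ⟨c, hc⟩ : ∃ c, p.coeff 2 = c := ⟨_, rfl⟩
    have hdeg3 : p.natDegree < 3 := by omega
    have hev : ∀ t : ℝ, p.eval t = a + b * t + c * t ^ 2 := by
      intro t
      rw [Polynomial.eval_eq_sum_range' hdeg3 t]
      simp only [Finset.sum_range_succ, Finset.sum_range_zero, ha, hb, hc]
      ring
    have hdd : p.derivative.natDegree < 3 :=
      lt_of_le_of_lt (Polynomial.natDegree_derivative_le p) (by omega)
    have hc3 : p.coeff 3 = 0 := Polynomial.coeff_eq_zero_of_natDegree_lt (by omega)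
    have hevd : ∀ t : ℝ, p.derivative.eval t = b + (2*c) * t + 0 * t ^ 2 := by
      intro t
      rw [Polynomial.eval_eq_sum_range' hdd t]
      simp only [Finset.sum_range_succ, Finset.sum_range_zero,
        Polynomial.coeff_derivative, hc3, ha, hb, hc]
      push_cast
      ring
    rw [norm_formula s hs _ b (2*c) 0 hevd, norm_formula s hs _ a b c hev]
    obtain ⟨Ep, hEp⟩ : ∃ x, a^2 + 2*a*b*(s+1) + (b^2+2*a*c)*((s+1)*(s+2))
      + 2*b*c*((s+1)*(s+2)*(s+3)) + c^2*((s+1)*(s+2)*(s+3)*(s+4)) = x := ⟨_, rfl⟩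
    obtain ⟨Ed, hEd⟩ : ∃ x, b^2 + 2*b*(2*c)*(s+1) + ((2*c)^2+2*b*0)*((s+1)*(s+2))
      + 2*(2*c)*0*((s+1)*(s+2)*(s+3)) + 0^2*((s+1)*(s+2)*(s+3)*(s+4)) = x := ⟨_, rfl⟩
    rw [hEp, hEd]
    have habc : a ≠ 0 ∨ b ≠ 0 ∨ c ≠ 0 := by
      by_contra h
      push_neg at h
      obtain ⟨ha0, hb0, hc0⟩ := h
      refine hp (Polynomial.ext fun n => ?_)
      simp only [Polynomial.coeff_zero]
      match n with
      | 0 => rw [ha]; exact ha0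
      | 1 => rw [hb]; exact hb0
      | 2 => rw [hc]; exact hc0
      | (m+3) => exact Polynomial.coeff_eq_zero_of_natDegree_lt (by omega)
    have hEppos : 0 < Ep := by
      have hsos : Ep = (a+(s+1)*b+(s+1)*(s+2)*c)^2 + (s+1)*(b+2*(s+2)*c)^2
          + 2*(s+1)*(s+2)*c^2 := by rw [← hEp]; ring
      rw [hsos]
      exact sos_pos s a b c hs1 hs2 habc
    have key : Ed ≤ μ * Ep := by
      rw [← hμdef, div_mul_eq_mul_div, le_div_iff₀ hden]
      have hident : (s+2+r)*((3*(s+2)+r)*Ep - 2*(s+1)*(s+2)*Ed)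
          = (s+2+r)*(3*(s+2)+r)*(a+(s+1)*b+(s+1)*(s+2)*c)^2
            + (s+1)*((s+2+r)*b+2*(s+2)*(s+4+r)*c)^2 := by
        rw [← hEp, ← hEd]
        linear_combination (2*(s+1)*(s+2)*c^2)*hr2
      have hpos : 0 < s+2+r := by linarith
      have hN : 0 ≤ (s+2+r)*((3*(s+2)+r)*Ep - 2*(s+1)*(s+2)*Ed) := by
        rw [hident]
        have h1 : 0 ≤ (s+2+r)*(3*(s+2)+r)*(a+(s+1)*b+(s+1)*(s+2)*c)^2 := by positivity
        have h2 : 0 ≤ (s+1)*((s+2+r)*b+2*(s+2)*(s+4+r)*c)^2 := by positivity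
        linarith
      have hX : 0 ≤ (3*(s+2)+r)*Ep - 2*(s+1)*(s+2)*Ed :=
        (mul_nonneg_iff_of_pos_left hpos).mp hN
      linarith
    have hgp : 0 < Real.Gamma (s+1) * Ep := mul_pos hg hEppos
    rw [div_le_iff₀ (Real.sqrt_pos.mpr hgp)]
    have h1 : Real.Gamma (s+1) * Ed ≤ μ * (Real.Gamma (s+1) * Ep) := by
      have := mul_le_mul_of_nonneg_left key hg.le
      linarith
    calc Real.sqrt (Real.Gamma (s+1) * Ed) ≤
        Real.sqrt (μ * (Real.Gamma (s+1) * Ep)) := Real.sqrt_le_sqrt h1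
      _ = Real.sqrt μ * Real.sqrt (Real.Gamma (s+1) * Ep) := Real.sqrt_mul hμ0 _
end

section
/- For X = L²((0,∞), t^s e^{-t} dt) with s > -1, the best constant for the second derivative over polynomials of degree at most 2 is M_{2,2}(s) = √(2/((s+1)(s+2))); in particular M_{2,2}(0) = 1. -/
open MeasureTheory

/-!
The moments of `t^s e^{-t} dt` are `∫ t^k t^s e^{-t} dt = Γ(s + k + 1)`, so the squared norm of
`p = aX² + bX + c` is an explicit quadratic form in `(a, b, c)`. Written in the orthogonal basis of
monic generalized Laguerre polynomials `1`, `X - (s + 1)`, `X² - 2(s + 2)X + (s + 1)(s + 2)`, whose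
squared norms are `Γ(s + 1)` times `1`, `s + 1`, `2(s + 1)(s + 2)`, it becomes a sum of three
squares, the last one being `2(s + 1)(s + 2)Γ(s + 1) a²`. As `p'' = 2a` has squared norm
`4a²Γ(s + 1)`, the ratio is at most `√(2 / ((s + 1)(s + 2)))`, with equality for the Laguerre
polynomial of degree two.
-/

open Real Set Polynomial

section GammaMoments

variable {s : ℝ}

lemma pow_mul_rpow_mul_exp_neg_eq {t : ℝ} (ht : 0 < t) (k : ℕ) :
    t ^ k * t ^ s * exp (-t) = exp (-t) * t ^ (s + k + 1 - 1) := by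
  rw [show s + k + 1 - 1 = k + s by ring, rpow_add ht, rpow_natCast]
  ring

lemma integrableOn_pow_mul_rpow_mul_exp_neg (hs : -1 < s) (k : ℕ) :
    IntegrableOn (fun t : ℝ => t ^ k * t ^ s * exp (-t)) (Ioi 0) :=
  (GammaIntegral_convergent (by have := k.cast_nonneg (α := ℝ); linarith)).congr_fun
    (fun _ ht => (pow_mul_rpow_mul_exp_neg_eq ht k).symm) measurableSet_Ioi

lemma integral_pow_mul_rpow_mul_exp_neg (hs : -1 < s) (k : ℕ) :
    ∫ t in Ioi (0 : ℝ), t ^ k * t ^ s * exp (-t) = Gamma (s + k + 1) := by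
  rw [Gamma_eq_integral (by have := k.cast_nonneg (α := ℝ); linarith)]
  exact setIntegral_congr_fun measurableSet_Ioi fun _ ht => pow_mul_rpow_mul_exp_neg_eq ht k

lemma integral_sum_pow_mul_rpow_mul_exp_neg (hs : -1 < s) {n : ℕ} (m : Fin n → ℝ) :
    ∫ t in Ioi (0 : ℝ), (∑ k, m k * t ^ (k : ℕ)) * t ^ s * exp (-t) =
      ∑ k, m k * Gamma (s + k + 1) := by
  have h_expand : ∀ t : ℝ, (∑ k, m k * t ^ (k : ℕ)) * t ^ s * exp (-t) =
      ∑ k, m k * (t ^ (k : ℕ) * t ^ s * exp (-t)) := fun t => by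
    simp only [Finset.sum_mul, mul_assoc]
  simp only [h_expand]
  rw [integral_finsetSum _ fun (k : Fin n) _ =>
    (integrableOn_pow_mul_rpow_mul_exp_neg hs k).const_mul (m k)]
  simp only [integral_const_mul, integral_pow_mul_rpow_mul_exp_neg hs]

lemma Gamma_add_nat_add_one (hs : -1 < s) (k : ℕ) :
    Gamma (s + k + 1) = (∏ i ∈ Finset.range k, (s + i + 1)) * Gamma (s + 1) := by
  induction k with
  | zero => simp
  | succ k ih =>
    rw [Finset.prod_range_succ, Nat.cast_succ, ← add_assoc, Gamma_add_one, ih]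
    · ring
    · have := k.cast_nonneg (α := ℝ); linarith

lemma integral_quadratic_sq_mul_rpow_mul_exp_neg (hs : -1 < s) (a b c : ℝ) :
    ∫ t in Ioi (0 : ℝ), (c + b * t + a * t ^ 2) ^ 2 * t ^ s * exp (-t) =
      Gamma (s + 1) * ((c + (s + 1) * b + (s + 1) * (s + 2) * a) ^ 2
        + (s + 1) * (b + 2 * (s + 2) * a) ^ 2 + 2 * (s + 1) * (s + 2) * a ^ 2) := by
  have h_sq : ∀ t : ℝ, (c + b * t + a * t ^ 2) ^ 2 =
      ∑ k, ![c ^ 2, 2 * b * c, b ^ 2 + 2 * a * c, 2 * a * b, a ^ 2] k * t ^ (k : ℕ) := by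
    intro t
    simp only [Fin.sum_univ_five, Matrix.cons_val, Fin.coe_ofNat_eq_mod]
    ring
  simp only [h_sq]
  rw [integral_sum_pow_mul_rpow_mul_exp_neg hs]
  simp only [Fin.sum_univ_five, Matrix.cons_val, Fin.coe_ofNat_eq_mod,
    Gamma_add_nat_add_one hs, Finset.prod_range_succ, Finset.prod_range_zero, Nat.cast_ofNat,
    Nat.cast_zero, Nat.cast_one]
  ring

end GammaMoments

lemma eval_eq_of_natDegree_le_two {p : ℝ[X]} (hp : p.natDegree ≤ 2) (t : ℝ) :
    p.eval t = p.coeff 0 + p.coeff 1 * t + p.coeff 2 * t ^ 2 := by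
  rw [eval_eq_sum_range' (show p.natDegree < 3 by omega)]
  simp [Finset.sum_range_succ]

lemma derivative_derivative_eq_C {p : ℝ[X]} (hp : p.natDegree ≤ 2) :
    p.derivative.derivative = C (2 * p.coeff 2) := by
  have h : p.derivative.derivative.natDegree ≤ 0 :=
    (natDegree_derivative_le _).trans <| by have := natDegree_derivative_le p; omega
  rw [eq_C_of_natDegree_le_zero h, coeff_derivative, coeff_derivative]
  congr 1
  push_cast
  ring

noncomputable def monicLaguerreTwo (s : ℝ) : ℝ[X] :=
  X ^ 2 - C (2 * (s + 2)) * X + C ((s + 1) * (s + 2))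

lemma coeff_monicLaguerreTwo (s : ℝ) :
    (monicLaguerreTwo s).coeff 0 = (s + 1) * (s + 2) ∧
      (monicLaguerreTwo s).coeff 1 = -(2 * (s + 2)) ∧ (monicLaguerreTwo s).coeff 2 = 1 := by
  simp only [monicLaguerreTwo, coeff_add, coeff_sub, coeff_X_pow, coeff_C_mul, coeff_X, coeff_C]
  norm_num

lemma natDegree_monicLaguerreTwo (s : ℝ) : (monicLaguerreTwo s).natDegree = 2 := by
  unfold monicLaguerreTwo
  compute_degree!

section Norm

variable {s : ℝ}

lemma genLaguerreNorm_eq (hs : -1 < s) {p : ℝ[X]} (hp : p.natDegree ≤ 2) :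
    genLaguerreNorm s p = √(Gamma (s + 1) *
      ((p.coeff 0 + (s + 1) * p.coeff 1 + (s + 1) * (s + 2) * p.coeff 2) ^ 2
        + (s + 1) * (p.coeff 1 + 2 * (s + 2) * p.coeff 2) ^ 2
        + 2 * (s + 1) * (s + 2) * p.coeff 2 ^ 2)) := by
  simp only [genLaguerreNorm, eval_eq_of_natDegree_le_two hp]
  rw [integral_quadratic_sq_mul_rpow_mul_exp_neg hs]

lemma genLaguerreNorm_derivative_derivative (hs : -1 < s) {p : ℝ[X]} (hp : p.natDegree ≤ 2) :
    genLaguerreNorm s p.derivative.derivative = √(Gamma (s + 1) * (2 * p.coeff 2) ^ 2) := by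
  rw [derivative_derivative_eq_C hp, genLaguerreNorm_eq hs ((natDegree_C _).trans_le zero_le_two)]
  simp

lemma genLaguerreNorm_derivative_derivative_div_le (hs : -1 < s) {p : ℝ[X]}
    (hp : p.natDegree ≤ 2) :
    genLaguerreNorm s p.derivative.derivative / genLaguerreNorm s p ≤
      √(2 / ((s + 1) * (s + 2))) := by
  have hs₁ : 0 < s + 1 := by linarith
  have hs₂ : 0 < s + 2 := by linarith
  have hG : 0 < Gamma (s + 1) := Gamma_pos_of_pos hs₁
  rw [genLaguerreNorm_derivative_derivative hs hp, genLaguerreNorm_eq hs hp,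
    ← sqrt_div' _ (by positivity)]
  refine sqrt_le_sqrt (div_le_of_le_mul₀ (by positivity) (by positivity) ?_)
  rw [div_mul_eq_mul_div, le_div_iff₀ (by positivity)]
  have : 0 ≤ (p.coeff 0 + (s + 1) * p.coeff 1 + (s + 1) * (s + 2) * p.coeff 2) ^ 2
        + (s + 1) * (p.coeff 1 + 2 * (s + 2) * p.coeff 2) ^ 2 := by positivity
  nlinarith [mul_nonneg hG.le this]

lemma genLaguerreNorm_derivative_derivative_div_monicLaguerreTwo (hs : -1 < s) :
    genLaguerreNorm s (monicLaguerreTwo s).derivative.derivative /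
        genLaguerreNorm s (monicLaguerreTwo s) = √(2 / ((s + 1) * (s + 2))) := by
  have hs₁ : 0 < s + 1 := by linarith
  have hs₂ : 0 < s + 2 := by linarith
  have hG : 0 < Gamma (s + 1) := Gamma_pos_of_pos hs₁
  have hp := (natDegree_monicLaguerreTwo s).le
  obtain ⟨h₀, h₁, h₂⟩ := coeff_monicLaguerreTwo s
  rw [genLaguerreNorm_derivative_derivative hs hp, genLaguerreNorm_eq hs hp, h₀, h₁, h₂,
    ← sqrt_div' _ (by positivity)]
  congr 1
  field_simp
  ring

end Norm

theorem best_constant_second_derivative_deg_two (s : ℝ) (hs : s > -1) :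
    sSup {r : ℝ | ∃ p : Polynomial ℝ, p ≠ 0 ∧ p.natDegree ≤ 2 ∧
        r = genLaguerreNorm s p.derivative.derivative / genLaguerreNorm s p} =
      Real.sqrt (2 / ((s + 1) * (s + 2))) ∧
    Real.sqrt (2 / ((0 + 1) * ((0 : ℝ) + 2))) = 1 := by
  refine ⟨IsGreatest.csSup_eq ⟨?_, ?_⟩, by norm_num⟩
  · refine ⟨monicLaguerreTwo s, ?_, (natDegree_monicLaguerreTwo s).le,
      (genLaguerreNorm_derivative_derivative_div_monicLaguerreTwo hs).symm⟩
    exact ne_zero_of_natDegree_gt (n := 0) (by rw [natDegree_monicLaguerreTwo]; norm_num)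
  · rintro r ⟨p, -, hp, rfl⟩
    exact genLaguerreNorm_derivative_derivative_div_le hs hp
end
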